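/- arXiv:1701.08355 — 5 statements merged into one kernel-verified Lean document; each statement's English description precedes it below -/
import Mathlib

section
/- Let G be a k-regular k-connected finite simple graph with k ≥ 5 and order N, and let l = l(G) be the maximum number of common neighbors over adjacent pairs of vertices of G. Suppose that: (1) N ≥ 4k − 2; (2) every two distinct vertices of G have at most 2 common neighbors; (3) for every U ⊆ V(G) with 2 ≤ |U| ≤ 2(2k − 4 − l), one has |N_G(U)| ≥ 2k − 2 − l; and (4) for every vertex cut F ⊆ V(G) with |F| ≤ 2k − 3 − l, the graph G − F has exactly two components, one of which is a trivial component. Then the 1-extra connectivity satisfies κ₁(G) = 2k − 2 − l. -/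
open SimpleGraph

/-- The neighborhood of a vertex set `U` in `G`: all vertices outside `U`
adjacent to at least one vertex of `U`. -/
def setNbhd {V : Type*} (G : SimpleGraph V) (U : Set V) : Set V :=
  {v | v ∉ U ∧ ∃ u ∈ U, G.Adj u v}

/-- `F` is a vertex cut of `G`: deleting `F` from `G` leaves a disconnected graph. -/
def IsVertexCut {V : Type*} (G : SimpleGraph V) (F : Set V) : Prop :=
  ¬ (G.induce (Fᶜ : Set V)).Preconnected

/-- `S` is a 1-extra vertex cut of `G`: `G − S` is disconnected and every
connected component of `G − S` has at least 2 vertices. -/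
def IsOneExtraCut {V : Type*} (G : SimpleGraph V) (S : Set V) : Prop :=
  ¬ (G.induce (Sᶜ : Set V)).Preconnected ∧
    ∀ C : (G.induce (Sᶜ : Set V)).ConnectedComponent, 2 ≤ C.supp.ncard

/-- The 1-extra connectivity `κ₁(G)`: the minimum cardinality of a 1-extra vertex cut. -/
noncomputable def extraConn1 {V : Type*} (G : SimpleGraph V) : ℕ :=
  sInf {m | ∃ S : Set V, IsOneExtraCut G S ∧ S.ncard = m}

/-- `G` is `t/t`-diagnosable: for every `S ⊆ V(G)` with `|S| = p` and `0 ≤ p ≤ t − 1`,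
`G − S` has at most one trivial component (a component with exactly one vertex) and
every nontrivial component `C` of `G − S` satisfies `|V(C)| ≥ 2(t−p)+1`. -/
def PessDiag {V : Type*} (G : SimpleGraph V) (t : ℕ) : Prop :=
  ∀ S : Set V, S.ncard < t →
    ({C : (G.induce (Sᶜ : Set V)).ConnectedComponent | C.supp.ncard = 1}.Subsingleton ∧
      ∀ C : (G.induce (Sᶜ : Set V)).ConnectedComponent, 2 ≤ C.supp.ncard →
        2 * (t - S.ncard) + 1 ≤ C.supp.ncard)

/-- The pessimistic diagnosability `t_p(G)`: the maximum `t` such that `G` is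
`t/t`-diagnosable. -/
noncomputable def pessDiagnosability {V : Type*} (G : SimpleGraph V) : ℕ :=
  sSup {t | PessDiag G t}

/-- `l(G)`: the maximum number of common neighbors over adjacent pairs of vertices. -/
noncomputable def maxAdjCommon {V : Type*} (G : SimpleGraph V) : ℕ :=
  sSup {m | ∃ u v : V, G.Adj u v ∧ (G.neighborSet u ∩ G.neighborSet v).ncard = m}

/-- `G` is `k`-connected: every vertex cut has at least `k` vertices and `|V(G)| > k`. -/
def KConnected {V : Type*} [Fintype V] (G : SimpleGraph V) (k : ℕ) : Prop :=
  k < Fintype.card V ∧ ∀ F : Set V, IsVertexCut G F → k ≤ F.ncard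

/-! For an edge `uv` attaining `l = l(G)`, the set `N({u, v})` has exactly `2k − 2 − l` vertices
and cuts `{u, v}` off from the rest of the graph. No vertex `x` left after deleting it is isolated:
`u` and `v` are adjacent, and any other `x` has at most `2 + 2 < k` of its neighbours in `N({u, v})`.
So `N({u, v})` is a 1-extra cut. Conversely, by (4) every smaller vertex cut leaves an isolated
vertex, so it is not 1-extra. -/

section

variable {V : Type*} {G : SimpleGraph V}

lemma exists_adj_ncard_inter_eq_maxAdjCommon [Finite V] (h : ∃ u v, G.Adj u v) :
    ∃ u v, G.Adj u v ∧ (G.neighborSet u ∩ G.neighborSet v).ncard = maxAdjCommon G := by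
  obtain ⟨u, v, huv⟩ := h
  refine Nat.sSup_mem (s := {m | ∃ u v, G.Adj u v ∧ (G.neighborSet u ∩ G.neighborSet v).ncard = m})
    ⟨_, u, v, huv, rfl⟩ ⟨Nat.card V, ?_⟩
  rintro _ ⟨x, y, -, rfl⟩
  exact Set.ncard_le_card _

lemma ncard_setNbhd_pair_add [Finite V] {u v : V} (huv : G.Adj u v) :
    (setNbhd G {u, v}).ncard + 2 + (G.neighborSet u ∩ G.neighborSet v).ncard =
      (G.neighborSet u).ncard + (G.neighborSet v).ncard := by
  have hS : setNbhd G {u, v} = (G.neighborSet u ∪ G.neighborSet v) \ {u, v} := by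
    ext x
    simp only [setNbhd, Set.mem_insert_iff, Set.mem_singleton_iff, exists_eq_or_imp,
      exists_eq_left, Set.mem_ofPred_eq, Set.mem_sdiff, Set.mem_union, mem_neighborSet]
    tauto
  have hsub : ({u, v} : Set V) ⊆ G.neighborSet u ∪ G.neighborSet v := by
    rintro x (rfl | rfl)
    · exact Or.inr huv.symm
    · exact Or.inl huv
  have hunion := Set.ncard_union_add_ncard_inter (G.neighborSet u) (G.neighborSet v)
  have hpair_le := Set.ncard_le_ncard hsub
  rw [hS, Set.ncard_sdiff hsub, Set.ncard_pair huv.ne] at *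
  omega

lemma mem_of_walk_induce_compl_setNbhd {U : Set V} {a b : ↥(setNbhd G U)ᶜ}
    (p : (G.induce (setNbhd G U)ᶜ).Walk a b) (ha : (a : V) ∈ U) : (b : V) ∈ U := by
  induction p with
  | nil => exact ha
  | @cons a c b hac _ ih => exact ih (Classical.byContradiction fun hc => c.2 ⟨hc, a, ha, hac⟩)

lemma not_preconnected_induce_compl_setNbhd {U : Set V} {u w : V} (hu : u ∈ U)
    (hw : w ∉ U ∪ setNbhd G U) : ¬ (G.induce (setNbhd G U)ᶜ).Preconnected := by
  intro hpre
  obtain ⟨p⟩ := hpre ⟨u, fun h => h.1 hu⟩ ⟨w, fun h => hw (Or.inr h)⟩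
  exact hw (Or.inl (mem_of_walk_induce_compl_setNbhd p hu))

lemma two_le_ncard_supp_of_forall_exists_adj [Finite V] {S : Set V}
    (h : ∀ x ∉ S, ∃ y ∉ S, G.Adj x y) (C : (G.induce Sᶜ).ConnectedComponent) :
    2 ≤ C.supp.ncard := by
  obtain ⟨x, rfl⟩ := C.exists_rep
  obtain ⟨y, hy, hxy⟩ := h x x.2
  have hadj : (G.induce Sᶜ).Adj x ⟨y, hy⟩ := hxy
  refine (Set.one_lt_ncard).mpr ⟨x, rfl, ⟨y, hy⟩, ?_, hadj.ne⟩
  exact ConnectedComponent.sound hadj.symm.reachable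

lemma exists_adj_notMem_setNbhd_pair [Finite V] {u v x : V} (huv : G.Adj u v)
    (hcommon : ∀ a b, a ≠ b → (G.neighborSet a ∩ G.neighborSet b).ncard ≤ 2)
    (hdeg : 4 < (G.neighborSet x).ncard) (hx : x ∉ setNbhd G {u, v}) :
    ∃ y ∉ setNbhd G {u, v}, G.Adj x y := by
  by_cases hxu : x = u
  · exact ⟨v, fun h => h.1 (Or.inr rfl), hxu ▸ huv⟩
  by_cases hxv : x = v
  · exact ⟨u, fun h => h.1 (Or.inl rfl), hxv ▸ huv.symm⟩
  by_contra! hall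
  have hsub : G.neighborSet x ⊆
      (G.neighborSet x ∩ G.neighborSet u) ∪ (G.neighborSet x ∩ G.neighborSet v) := by
    intro y hxy
    obtain ⟨-, z, hz, hzy⟩ : y ∈ setNbhd G {u, v} :=
      Classical.byContradiction fun hy => hall y hy hxy
    rcases hz with rfl | rfl
    · exact Or.inl ⟨hxy, hzy⟩
    · exact Or.inr ⟨hxy, hzy⟩
  have := calc
    (G.neighborSet x).ncard
      ≤ ((G.neighborSet x ∩ G.neighborSet u) ∪ (G.neighborSet x ∩ G.neighborSet v)).ncard :=
        Set.ncard_le_ncard hsub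
    _ ≤ (G.neighborSet x ∩ G.neighborSet u).ncard + (G.neighborSet x ∩ G.neighborSet v).ncard :=
        Set.ncard_union_le _ _
    _ ≤ 2 + 2 := add_le_add (hcommon _ _ hxu) (hcommon _ _ hxv)
  omega

lemma isOneExtraCut_setNbhd_pair [Finite V] {u v w : V} (huv : G.Adj u v)
    (hcommon : ∀ a b, a ≠ b → (G.neighborSet a ∩ G.neighborSet b).ncard ≤ 2)
    (hdeg : ∀ x, 4 < (G.neighborSet x).ncard) (hw : w ∉ {u, v} ∪ setNbhd G {u, v}) :
    IsOneExtraCut G (setNbhd G {u, v}) :=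
  ⟨not_preconnected_induce_compl_setNbhd (Or.inl rfl) hw,
    two_le_ncard_supp_of_forall_exists_adj fun _ hx =>
      exists_adj_notMem_setNbhd_pair huv hcommon (hdeg _) hx⟩

lemma lt_ncard_of_isOneExtraCut {m : ℕ}
    (h : ∀ F : Set V, IsVertexCut G F → F.ncard ≤ m →
      ∃ C : (G.induce Fᶜ).ConnectedComponent, C.supp.ncard = 1)
    {S : Set V} (hS : IsOneExtraCut G S) : m < S.ncard := by
  by_contra! hle
  obtain ⟨C, hC⟩ := h S hS.1 hle
  have := hS.2 C
  omega

end

theorem extraConn_eq_general {V : Type*} [Fintype V] (G : SimpleGraph V) (k : ℕ) (hk : 5 ≤ k)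
    (hreg : ∀ v : V, (G.neighborSet v).ncard = k)
    (h1 : 4 * k - 2 ≤ Fintype.card V)
    (h2 : ∀ u v : V, u ≠ v → (G.neighborSet u ∩ G.neighborSet v).ncard ≤ 2)
    (h4 : ∀ F : Set V, IsVertexCut G F → F.ncard ≤ 2 * k - 3 - maxAdjCommon G →
      ∃ C₀ C₁ : (G.induce (Fᶜ : Set V)).ConnectedComponent, C₀ ≠ C₁ ∧
        C₀.supp.ncard = 1 ∧ ∀ C, C = C₀ ∨ C = C₁) :
    extraConn1 G = 2 * k - 2 - maxAdjCommon G := by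
  have hdeg (x : V) : 4 < (G.neighborSet x).ncard := by rw [hreg]; omega
  obtain ⟨x⟩ : Nonempty V := Fintype.card_pos_iff.mp (by omega)
  obtain ⟨u, v, huv, hl⟩ := exists_adj_ncard_inter_eq_maxAdjCommon (G := G) <| by
    obtain ⟨y, hy⟩ := Set.nonempty_of_ncard_ne_zero (s := G.neighborSet x) (by have := hdeg x; omega)
    exact ⟨x, y, hy⟩
  have hcard := ncard_setNbhd_pair_add huv
  rw [hreg, hreg, hl] at hcard
  obtain ⟨w, hw⟩ : ∃ w, w ∉ {u, v} ∪ setNbhd G {u, v} := by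
    refine (Set.ne_univ_iff_exists_notMem _).mp fun huniv => ?_
    have := Set.ncard_union_le {u, v} (setNbhd G {u, v})
    rw [huniv, Set.ncard_univ, Nat.card_eq_fintype_card, Set.ncard_pair huv.ne] at this
    omega
  have hleast : IsLeast {m | ∃ S, IsOneExtraCut G S ∧ S.ncard = m} (setNbhd G {u, v}).ncard := by
    refine ⟨⟨_, isOneExtraCut_setNbhd_pair huv h2 hdeg hw, rfl⟩, ?_⟩
    rintro _ ⟨T, hT, rfl⟩
    have := lt_ncard_of_isOneExtraCut (fun F hF hle => (h4 F hF hle).imp fun _ ⟨_, _, h, _⟩ => h) hT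
    omega
  rw [extraConn1, hleast.csInf_eq]
  omega

/-- Under the hypotheses of the main theorem, the 1-extra connectivity
of `G` equals `2k − 2 − l`. -/
theorem extraConn_eq {V : Type*} [Fintype V] (G : SimpleGraph V) (k : ℕ) (hk : 5 ≤ k)
    (hreg : ∀ v : V, (G.neighborSet v).ncard = k)
    (hconn : KConnected G k)
    (h1 : 4 * k - 2 ≤ Fintype.card V)
    (h2 : ∀ u v : V, u ≠ v → (G.neighborSet u ∩ G.neighborSet v).ncard ≤ 2)
    (h3 : ∀ U : Set V, 2 ≤ U.ncard → U.ncard ≤ 2 * (2 * k - 4 - maxAdjCommon G) →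
      2 * k - 2 - maxAdjCommon G ≤ (setNbhd G U).ncard)
    (h4 : ∀ F : Set V, IsVertexCut G F → F.ncard ≤ 2 * k - 3 - maxAdjCommon G →
      ∃ C₀ C₁ : (G.induce (Fᶜ : Set V)).ConnectedComponent, C₀ ≠ C₁ ∧
        C₀.supp.ncard = 1 ∧ ∀ C, C = C₀ ∨ C = C₁) :
    extraConn1 G = 2 * k - 2 - maxAdjCommon G :=
  extraConn_eq_general G k hk hreg h1 h2 h4
end

section
/- Let G be a k-regular k-connected finite simple graph with k ≥ 5 and order N, and let l = l(G) be the maximum number of common neighbors over adjacent pairs of vertices of G. Suppose that: (1) N ≥ 4k − 2; (2) every two distinct vertices of G have at most 2 common neighbors; (3) for every U ⊆ V(G) with 2 ≤ |U| ≤ 2(2k − 4 − l), one has |N_G(U)| ≥ 2k − 2 − l; and (4) for every vertex cut F ⊆ V(G) with |F| ≤ 2k − 3 − l, the graph G − F has exactly two components, one of which is a trivial component. Then the pessimistic diagnosability satisfies t_p(G) = 2k − 2 − l; that is, G is (2k−2−l)/(2k−2−l)-diagnosable but not (2k−1−l)/(2k−1−l)-diagnosable. -/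
open SimpleGraph

lemma mem_of_walk {V : Type*} {G : SimpleGraph V} {T : Set V}
    (hT : ∀ x ∈ T, ∀ y, G.Adj x y → y ∈ T) {u w : V} (p : G.Walk u w) : u ∈ T → w ∈ T := by
  induction p with
  | nil => exact id
  | cons h q ih => exact fun hu => ih (hT _ hu _ h)

lemma ncard_compl_eq {V : Type*} [Fintype V] (S : Set V) :
    Sᶜ.ncard = Fintype.card V - S.ncard := by
  have h : S.ncard + Sᶜ.ncard = Fintype.card V := by
    rw [← Nat.card_eq_fintype_card, ← Set.ncard_univ,
      ← Set.ncard_union_eq disjoint_compl_right (Set.toFinite _) (Set.toFinite _),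
      Set.union_compl_self]
  omega

lemma pessDiag_mono {V : Type*} {G : SimpleGraph V} {s t : ℕ} (h : s ≤ t)
    (ht : PessDiag G t) : PessDiag G s := by
  intro S hS
  obtain ⟨h1, h2⟩ := ht S (lt_of_lt_of_le hS h)
  exact ⟨h1, fun C hC => le_trans (by omega) (h2 C hC)⟩

/-- Under the hypotheses of the main theorem, the pessimistic
diagnosability of `G` equals `2k − 2 − l`; that is, `G` is `(2k−2−l)/(2k−2−l)`-diagnosable
but not `(2k−1−l)/(2k−1−l)`-diagnosable. -/
theorem pessDiag_eq {V : Type*} [Fintype V] (G : SimpleGraph V) (k : ℕ) (hk : 5 ≤ k)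
    (hreg : ∀ v : V, (G.neighborSet v).ncard = k)
    (hconn : KConnected G k)
    (h1 : 4 * k - 2 ≤ Fintype.card V)
    (h2 : ∀ u v : V, u ≠ v → (G.neighborSet u ∩ G.neighborSet v).ncard ≤ 2)
    (h3 : ∀ U : Set V, 2 ≤ U.ncard → U.ncard ≤ 2 * (2 * k - 4 - maxAdjCommon G) →
      2 * k - 2 - maxAdjCommon G ≤ (setNbhd G U).ncard)
    (h4 : ∀ F : Set V, IsVertexCut G F → F.ncard ≤ 2 * k - 3 - maxAdjCommon G →
      ∃ C₀ C₁ : (G.induce (Fᶜ : Set V)).ConnectedComponent, C₀ ≠ C₁ ∧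
        C₀.supp.ncard = 1 ∧ ∀ C, C = C₀ ∨ C = C₁) :
    pessDiagnosability G = 2 * k - 2 - maxAdjCommon G ∧
      PessDiag G (2 * k - 2 - maxAdjCommon G) ∧ ¬ PessDiag G (2 * k - 1 - maxAdjCommon G) := by
  set l := maxAdjCommon G with hl
  -- basic facts about l
  have hVpos : 0 < Fintype.card V := by omega
  have : Nonempty V := Fintype.card_pos_iff.mp hVpos
  obtain ⟨v0⟩ := this
  have hnv0 : (G.neighborSet v0).ncard = k := hreg v0
  have hns : (G.neighborSet v0).Nonempty := by
    apply Set.nonempty_of_ncard_ne_zero; omega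
  obtain ⟨w0, hw0⟩ := hns
  have hne : {m | ∃ u v : V, G.Adj u v ∧ (G.neighborSet u ∩ G.neighborSet v).ncard = m}.Nonempty :=
    ⟨_, v0, w0, hw0, rfl⟩
  have hbdd : ∀ m ∈ {m | ∃ u v : V, G.Adj u v ∧ (G.neighborSet u ∩ G.neighborSet v).ncard = m},
      m ≤ 2 := by
    rintro m ⟨u, v, huv, rfl⟩
    exact h2 u v huv.ne
  have hl2 : l ≤ 2 := csSup_le hne hbdd
  have hlmem : l ∈ {m | ∃ u v : V, G.Adj u v ∧ (G.neighborSet u ∩ G.neighborSet v).ncard = m} :=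
    Nat.sSup_mem hne ⟨2, hbdd⟩
  -- Part A : PessDiag G (2k-2-l)
  have hPD : PessDiag G (2 * k - 2 - l) := by
    intro S hS
    have hcompl : Sᶜ.ncard = Fintype.card V - S.ncard := ncard_compl_eq S
    by_cases hpre : (G.induce (Sᶜ : Set V)).Preconnected
    · have hallC : ∀ C D : (G.induce (Sᶜ : Set V)).ConnectedComponent, C = D := by
        intro C D
        obtain ⟨c, rfl⟩ := C.exists_rep
        obtain ⟨d, rfl⟩ := D.exists_rep
        exact ConnectedComponent.sound (hpre c d)
      refine ⟨fun C _ D _ => hallC C D, fun C _ => ?_⟩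
      have hsupp : C.supp = Set.univ := by
        obtain ⟨c, rfl⟩ := C.exists_rep
        ext x
        simp only [ConnectedComponent.mem_supp_iff, Set.mem_univ, iff_true]
        exact hallC _ _
      have hcard : C.supp.ncard = Sᶜ.ncard := by
        rw [hsupp, Set.ncard_univ, Nat.card_coe_set_eq]
      omega
    · obtain ⟨C₀, C₁, hne01, hC0, hall⟩ := h4 S hpre (by omega)
      have hdisj : Disjoint C₀.supp C₁.supp := by
        rw [Set.disjoint_left]
        intro x hx0 hx1
        rw [ConnectedComponent.mem_supp_iff] at hx0 hx1
        exact hne01 (hx0 ▸ hx1)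
      have hunion : C₀.supp ∪ C₁.supp = Set.univ := by
        ext x
        simp only [Set.mem_union, ConnectedComponent.mem_supp_iff, Set.mem_univ, iff_true]
        exact hall _
      have hsum : C₀.supp.ncard + C₁.supp.ncard = Sᶜ.ncard := by
        rw [← Set.ncard_union_eq hdisj (Set.toFinite _) (Set.toFinite _), hunion,
          Set.ncard_univ, Nat.card_coe_set_eq]
      constructor
      · intro C hC D hD
        simp only [Set.mem_setOf_eq] at hC hD
        have hC' : C = C₀ := by
          rcases hall C with h | h
          · exact h
          · exfalso; rw [h] at hC; omega
        have hD' : D = C₀ := by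
          rcases hall D with h | h
          · exact h
          · exfalso; rw [h] at hD; omega
        rw [hC', hD']
      · intro C hC2
        rcases hall C with rfl | rfl
        · omega
        · omega
  -- Part B : ¬ PessDiag G (2k-1-l)
  obtain ⟨u, v, huv, hcard⟩ := hlmem
  set S : Set V := (G.neighborSet u ∪ G.neighborSet v) \ {u, v} with hSdef
  have hsub : ({u, v} : Set V) ⊆ G.neighborSet u ∪ G.neighborSet v := by
    intro x hx
    simp only [Set.mem_insert_iff, Set.mem_singleton_iff] at hx
    rcases hx with rfl | rfl
    · exact Or.inr huv.symm
    · exact Or.inl huv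
  have hUnion : (G.neighborSet u ∪ G.neighborSet v).ncard = 2 * k - l := by
    have h := Set.ncard_union_add_ncard_inter (G.neighborSet u) (G.neighborSet v)
      (Set.toFinite _) (Set.toFinite _)
    rw [hreg u, hreg v, hcard] at h
    omega
  have hScard : S.ncard = 2 * k - 2 - l := by
    rw [hSdef, Set.ncard_diff hsub (Set.toFinite _), hUnion, Set.ncard_pair huv.ne]; omega
  have huS : u ∈ (Sᶜ : Set V) := by
    intro h
    exact h.2 (Or.inl rfl)
  have hvS : v ∈ (Sᶜ : Set V) := by
    intro h
    exact h.2 (Or.inr rfl)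
  have hNPD : ¬ PessDiag G (2 * k - 1 - l) := by
    intro hPD'
    obtain ⟨_, hsize⟩ := hPD' S (by omega)
    set u' : ↥(Sᶜ : Set V) := ⟨u, huS⟩ with hu'
    set v' : ↥(Sᶜ : Set V) := ⟨v, hvS⟩ with hv'
    have hT : ∀ x ∈ ({u', v'} : Set ↥(Sᶜ : Set V)), ∀ y,
        (G.induce (Sᶜ : Set V)).Adj x y → y ∈ ({u', v'} : Set ↥(Sᶜ : Set V)) := by
      intro x hx y hadj
      simp only [Set.mem_insert_iff, Set.mem_singleton_iff] at hx ⊢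
      have hyS : (y : V) ∉ S := y.2
      rcases hx with rfl | rfl
      · have hadj' : G.Adj u (y : V) := hadj
        right
        apply Subtype.ext
        by_contra hyv
        exact hyS ⟨Or.inl hadj', by
          simp only [Set.mem_insert_iff, Set.mem_singleton_iff]
          push_neg
          exact ⟨hadj'.ne', hyv⟩⟩
      · have hadj' : G.Adj v (y : V) := hadj
        left
        apply Subtype.ext
        by_contra hyu
        exact hyS ⟨Or.inr hadj', by
          simp only [Set.mem_insert_iff, Set.mem_singleton_iff]
          push_neg
          exact ⟨hyu, hadj'.ne'⟩⟩
    have hsupp : ((G.induce (Sᶜ : Set V)).connectedComponentMk u').supp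
        = ({u', v'} : Set ↥(Sᶜ : Set V)) := by
      ext x
      simp only [ConnectedComponent.mem_supp_iff]
      constructor
      · intro h
        have hr : (G.induce (Sᶜ : Set V)).Reachable u' x := (ConnectedComponent.eq.mp h).symm
        obtain ⟨p⟩ := hr
        exact mem_of_walk hT p (by left; rfl)
      · intro h
        simp only [Set.mem_insert_iff, Set.mem_singleton_iff] at h
        rcases h with rfl | rfl
        · rfl
        · exact ConnectedComponent.sound
            ((show (G.induce (Sᶜ : Set V)).Adj v' u' from huv.symm)).reachable
    have hne' : u' ≠ v' := fun h => huv.ne (congrArg Subtype.val h)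
    have h2c : (({u', v'} : Set ↥(Sᶜ : Set V))).ncard = 2 := Set.ncard_pair hne'
    have hfin := hsize _ (by rw [hsupp, h2c])
    rw [hsupp, h2c] at hfin
    omega
  -- Part C : conclusion
  have hmono : ∀ t' ∈ {t | PessDiag G t}, t' ≤ 2 * k - 2 - l := by
    intro t' ht'
    by_contra hgt
    push_neg at hgt
    exact hNPD (pessDiag_mono (by omega) ht')
  refine ⟨le_antisymm (csSup_le ⟨_, hPD⟩ hmono) (le_csSup ⟨_, hmono⟩ hPD), hPD, hNPD⟩
end

section
/- For any n-dimensional BC network X_n ∈ L_n with n ≥ 5, t_p(X_n) = 2n − 2 = κ₁(X_n), where t_p is the pessimistic diagnosability and κ₁ is the 1-extra connectivity. -/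
open SimpleGraph

/-- The class `L_n` of `n`-dimensional BC networks: `L_1` consists of the complete graph on
two vertices, and a graph is in `L_{n+1}` iff its vertex set is the disjoint union of the
vertex sets of two graphs `G₁, G₂ ∈ L_n` and its edges are those of `G₁`, those of `G₂`,
and a perfect matching (given by a bijection `f`) between the two vertex sets. -/
inductive IsBC : ∀ (n : ℕ) (V : Type), SimpleGraph V → Prop
  | base : IsBC 1 Bool ⊤
  | step {n : ℕ} {V₁ V₂ : Type} (G₁ : SimpleGraph V₁) (G₂ : SimpleGraph V₂) (f : V₁ ≃ V₂) :
      IsBC n V₁ G₁ → IsBC n V₂ G₂ →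
      IsBC (n + 1) (V₁ ⊕ V₂) (SimpleGraph.fromRel (fun u v =>
        (∃ a b, u = Sum.inl a ∧ v = Sum.inl b ∧ G₁.Adj a b) ∨
        (∃ a b, u = Sum.inr a ∧ v = Sum.inr b ∧ G₂.Adj a b) ∨
        (∃ a, u = Sum.inl a ∧ v = Sum.inr (f a))))

/-!
Every `X ∈ L_n` is `n`-regular on `2^n` vertices, and two distinct vertices have at most two
common neighbours. The heart of the proof, by induction along the construction, is that deleting
at most `2n - 3` vertices leaves a component containing all but at most one remaining vertex.
In `X_{n+1}`, the big components of the two halves `X_n` are joined by a matching edge (there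
are `2^n` of them), and the exceptional vertices of the two halves cannot both stay cut off:
that would need all `n` half-neighbours of each to be deleted, i.e. `2n > 2(n + 1) - 3` faults.
When one half carries at most one fault it is connected, and each vertex of the other half
reaches it through its matching edge, unless its partner is that fault.

So deleting fewer than `2n - 2` vertices leaves one big component and at most one isolated
vertex: this gives `(2n - 2)/(2n - 2)`-diagnosability and rules out smaller 1-extra cuts.
Conversely the neighbourhood of an edge `uv` has at most `2n - 2` vertices and cuts off `{u, v}`,
while every other vertex keeps one of its `n ≥ 5` neighbours, having lost at most `2 + 2` of
them; so it is a 1-extra cut, and its 2-vertex component blocks `(2n - 1)/(2n - 1)`-diagnosability.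
-/

namespace SimpleGraph

variable {V : Type*} {G : SimpleGraph V}

def PreconnectedUpToOne (G : SimpleGraph V) : Prop :=
  ∃ C : G.ConnectedComponent, C.suppᶜ.Subsingleton

theorem ConnectedComponent.eq_of_two_le_ncard_supp [Finite V] {C D : G.ConnectedComponent}
    (hC : C.suppᶜ.Subsingleton) (hD : 2 ≤ D.supp.ncard) : D = C := by
  by_contra hDC
  have hsub : D.supp ⊆ C.suppᶜ := fun v hvD hvC => hDC (eq_of_common_vertex hvD hvC)
  have := (Set.ncard_le_ncard hsub).trans (Set.ncard_le_one_iff_subsingleton.2 hC)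
  omega

theorem ConnectedComponent.apply_mem_supp_map {W : Type*} {G' : SimpleGraph W} (φ : G →g G')
    {C : G.ConnectedComponent} {v : V} (hv : v ∈ C.supp) : φ v ∈ (C.map φ).supp := by
  rw [ConnectedComponent.mem_supp_iff] at hv ⊢
  rw [← hv, ConnectedComponent.map_mk]

namespace PreconnectedUpToOne

variable [Finite V]

theorem preconnected (h : G.PreconnectedUpToOne)
    (h2 : ∀ C : G.ConnectedComponent, 2 ≤ C.supp.ncard) : G.Preconnected := by
  obtain ⟨C, hC⟩ := h
  intro u v
  apply ConnectedComponent.exact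
  rw [ConnectedComponent.eq_of_two_le_ncard_supp hC (h2 (G.connectedComponentMk u)),
    ConnectedComponent.eq_of_two_le_ncard_supp hC (h2 (G.connectedComponentMk v))]

theorem card_le_ncard_supp_add_one (h : G.PreconnectedUpToOne) {C : G.ConnectedComponent}
    (hC : 2 ≤ C.supp.ncard) : Nat.card V ≤ C.supp.ncard + 1 := by
  obtain ⟨C₀, hC₀⟩ := h
  obtain rfl := ConnectedComponent.eq_of_two_le_ncard_supp hC₀ hC
  have := Set.ncard_le_one_iff_subsingleton.2 hC₀
  rw [← Set.ncard_add_ncard_compl C.supp]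
  omega

theorem subsingleton_setOf_ncard_supp_eq_one (h : G.PreconnectedUpToOne)
    (hV : 3 ≤ Nat.card V) : {C : G.ConnectedComponent | C.supp.ncard = 1}.Subsingleton := by
  obtain ⟨C₀, hC₀⟩ := h
  have hsub : ∀ D : G.ConnectedComponent, D.supp.ncard = 1 → D.supp ⊆ C₀.suppᶜ := by
    intro D hD v hvD hvC
    obtain rfl := ConnectedComponent.eq_of_common_vertex hvD hvC
    have := Set.ncard_le_one_iff_subsingleton.2 hC₀
    have := Set.ncard_add_ncard_compl D.supp
    omega
  intro D hD D' hD'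
  obtain ⟨v, hv⟩ := D.nonempty_supp
  obtain ⟨v', hv'⟩ := D'.nonempty_supp
  exact ConnectedComponent.eq_of_common_vertex hv (hC₀ (hsub D' hD' hv') (hsub D hD hv) ▸ hv')

end PreconnectedUpToOne

section Deletion

variable {S : Set V} {C : (G.induce Sᶜ).ConnectedComponent}

theorem neighborSet_subset_of_notMem_supp (hC : C.suppᶜ.Subsingleton) {v : V} (hv : v ∉ S)
    (hvC : ⟨v, hv⟩ ∉ C.supp) : G.neighborSet v ⊆ S := by
  intro w hvw
  by_contra hw
  have hwC : (⟨w, hw⟩ : ↥Sᶜ) ∈ C.supp := by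
    by_contra hwC
    exact G.ne_of_adj hvw (congrArg Subtype.val (hC hvC hwC))
  exact hvC (C.mem_supp_of_adj_mem_supp hwC hvw.symm)

theorem ncard_compl_image_supp_le [Finite V] (hC : C.suppᶜ.Subsingleton) :
    (Subtype.val '' C.supp)ᶜ.ncard ≤ S.ncard + 1 := by
  have hsub : (Subtype.val '' C.supp)ᶜ ⊆ S ∪ Subtype.val '' C.suppᶜ := by
    intro v hv
    by_cases hvS : v ∈ S
    · exact Or.inl hvS
    · exact Or.inr ⟨⟨v, hvS⟩, fun h => hv ⟨_, h, rfl⟩, rfl⟩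
  calc _ ≤ (S ∪ Subtype.val '' C.suppᶜ).ncard := Set.ncard_le_ncard hsub
    _ ≤ S.ncard + (Subtype.val '' C.suppᶜ).ncard := Set.ncard_union_le _ _
    _ ≤ S.ncard + 1 := by
      gcongr
      exact (Set.ncard_image_le (Set.toFinite _)).trans
        (Set.ncard_le_one_iff_subsingleton.2 hC)

theorem exists_mem_image_val_supp_of_ncard_lt {W : Type*} [Finite V] [Finite W]
    {G' : SimpleGraph W} {S' : Set W} {C' : (G'.induce S'ᶜ).ConnectedComponent} (f : V ≃ W)
    (hC : C.suppᶜ.Subsingleton) (hC' : C'.suppᶜ.Subsingleton)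
    (h : S.ncard + S'.ncard + 2 < Nat.card V) :
    ∃ a ∈ Subtype.val '' C.supp, f a ∈ Subtype.val '' C'.supp := by
  obtain ⟨a, -, ha⟩ := Set.exists_mem_notMem_of_ncard_lt_ncard
    (s := (Subtype.val '' C.supp)ᶜ ∪ f ⁻¹' (Subtype.val '' C'.supp)ᶜ) (t := Set.univ) (by
      rw [Set.ncard_univ]
      calc _ ≤ _ := Set.ncard_union_le _ _
        _ ≤ S.ncard + 1 + (S'.ncard + 1) :=
          add_le_add (ncard_compl_image_supp_le hC)
            ((Set.ncard_preimage_of_injective_subset_range f.injective (by simp)).trans_le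
              (ncard_compl_image_supp_le hC'))
        _ < _ := by omega)
  simp only [Set.mem_union, Set.mem_compl_iff, Set.mem_preimage, not_or, not_not] at ha
  exact ⟨a, ha⟩

end Deletion

section EdgeNeighborSet

variable {u v : V}

theorem two_le_ncard_supp_connectedComponentMk [Finite V] (huv : G.Adj u v) :
    2 ≤ (G.connectedComponentMk u).supp.ncard := by
  have hsub : {u, v} ⊆ (G.connectedComponentMk u).supp := by
    rintro x (rfl | rfl)
    · exact ConnectedComponent.connectedComponentMk_mem
    · exact (ConnectedComponent.connectedComponentMk_eq_of_adj huv).symm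
  exact (Set.ncard_pair huv.ne).ge.trans (Set.ncard_le_ncard hsub)

theorem exists_adj_notMem_neighborSet_union [Finite V] {x : V}
    (hx : 5 ≤ (G.neighborSet x).ncard) (hxu : (G.commonNeighbors x u).ncard ≤ 2)
    (hxv : (G.commonNeighbors x v).ncard ≤ 2) :
    ∃ y, G.Adj x y ∧ y ∉ G.neighborSet u ∪ G.neighborSet v := by
  have hcommon : G.neighborSet x ∩ (G.neighborSet u ∪ G.neighborSet v) =
      G.commonNeighbors x u ∪ G.commonNeighbors x v := by
    rw [commonNeighbors_eq, commonNeighbors_eq, Set.inter_union_distrib_left]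
  obtain ⟨y, hxy, hy⟩ := Set.exists_mem_notMem_of_ncard_lt_ncard
    (s := G.neighborSet x ∩ (G.neighborSet u ∪ G.neighborSet v)) (t := G.neighborSet x) (by
      rw [hcommon]
      linarith [Set.ncard_union_le (G.commonNeighbors x u) (G.commonNeighbors x v)])
  exact ⟨y, hxy, fun h => hy ⟨hxy, h⟩⟩

def edgeNeighborSet (G : SimpleGraph V) (u v : V) : Set V :=
  (G.neighborSet u ∪ G.neighborSet v) \ {u, v}

theorem left_notMem_edgeNeighborSet : u ∉ G.edgeNeighborSet u v := fun h => h.2 (.inl rfl)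

theorem right_notMem_edgeNeighborSet : v ∉ G.edgeNeighborSet u v := fun h => h.2 (.inr rfl)

theorem ncard_edgeNeighborSet_le [Finite V] (huv : G.Adj u v) :
    (G.edgeNeighborSet u v).ncard ≤ (G.neighborSet u).ncard + (G.neighborSet v).ncard - 2 := by
  have hsub : {u, v} ⊆ G.neighborSet u ∪ G.neighborSet v := by
    rintro x (rfl | rfl)
    · exact .inr huv.symm
    · exact .inl huv
  rw [edgeNeighborSet, Set.ncard_sdiff hsub, Set.ncard_pair huv.ne]
  exact Nat.sub_le_sub_right (Set.ncard_union_le _ _) 2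

theorem supp_connectedComponentMk_induce_compl_edgeNeighborSet (huv : G.Adj u v) :
    ((G.induce (G.edgeNeighborSet u v)ᶜ).connectedComponentMk
      ⟨u, left_notMem_edgeNeighborSet⟩).supp =
      {⟨u, left_notMem_edgeNeighborSet⟩, ⟨v, right_notMem_edgeNeighborSet⟩} := by
  set H := G.induce (G.edgeNeighborSet u v)ᶜ
  set s : Set ↥(G.edgeNeighborSet u v)ᶜ := {x | x.1 = u ∨ x.1 = v}
  have hclosed : ∀ x ∈ s, ∀ y, H.Adj x y → y ∈ s := by
    rintro x hx ⟨y, hy⟩ hxy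
    by_contra hys
    apply hy
    refine ⟨?_, hys⟩
    rcases hx with hx | hx
    · exact .inl (hx ▸ hxy)
    · exact .inr (hx ▸ hxy)
  ext x
  rw [ConnectedComponent.mem_supp_iff, ConnectedComponent.eq]
  constructor
  · intro hxu
    have := hxu.symm.mem_subgraphVerts (H := (⊤ : H.Subgraph).induce s)
      (fun y hy z hyz => ⟨hy, hclosed y hy z hyz, hyz⟩) (Or.inl rfl)
    rcases this with h | h
    · exact .inl (Subtype.ext h)
    · exact .inr (Subtype.ext h)
  · rintro (rfl | rfl)
    · rfl
    · exact Adj.reachable (show G.Adj v u from huv.symm)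

theorem isOneExtraCut_edgeNeighborSet [Finite V] (huv : G.Adj u v)
    (hdeg : ∀ x, 5 ≤ (G.neighborSet x).ncard)
    (hcommon : ∀ x y, x ≠ y → (G.commonNeighbors x y).ncard ≤ 2)
    {z : V} (hz : z ∉ G.neighborSet u ∪ G.neighborSet v) :
    IsOneExtraCut G (G.edgeNeighborSet u v) := by
  set H := G.induce (G.edgeNeighborSet u v)ᶜ
  have hsupp := supp_connectedComponentMk_induce_compl_edgeNeighborSet huv
  refine ⟨fun hpre => ?_, fun C => ?_⟩
  · have hzS : z ∉ G.edgeNeighborSet u v := fun h => hz h.1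
    have hzC := ConnectedComponent.sound (hpre ⟨z, hzS⟩ ⟨u, left_notMem_edgeNeighborSet⟩)
    rw [← ConnectedComponent.mem_supp_iff, hsupp] at hzC
    rcases hzC with h | h
    · obtain rfl : z = u := congrArg Subtype.val h
      exact hz (.inr huv.symm)
    · obtain rfl : z = v := congrArg Subtype.val h
      exact hz (.inl huv)
  · induction C using ConnectedComponent.ind with | h x => ?_
    obtain ⟨x, hx⟩ := x
    by_cases hxuv : x = u ∨ x = v
    · have hxC : H.connectedComponentMk ⟨x, hx⟩ =
          H.connectedComponentMk ⟨u, left_notMem_edgeNeighborSet⟩ := by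
        rw [← ConnectedComponent.mem_supp_iff, hsupp]
        rcases hxuv with rfl | rfl
        · exact .inl rfl
        · exact .inr rfl
      rw [hxC, hsupp,
        Set.ncard_pair fun h => huv.ne (congrArg Subtype.val h)]
    · have hxN : x ∉ G.neighborSet u ∪ G.neighborSet v := fun h => hx ⟨h, hxuv⟩
      have hxu : x ≠ u := fun h => hxuv (.inl h)
      have hxv : x ≠ v := fun h => hxuv (.inr h)
      obtain ⟨y, hxy, hy⟩ := exists_adj_notMem_neighborSet_union (hdeg x) (hcommon x u hxu)
        (hcommon x v hxv)
      exact two_le_ncard_supp_connectedComponentMk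
        (show H.Adj ⟨x, hx⟩ ⟨y, fun h => hy h.1⟩ from hxy)

end EdgeNeighborSet

end SimpleGraph

theorem Set.ncard_eq_ncard_preimage_inl_add_ncard_preimage_inr {α β : Type*} [Finite α]
    [Finite β] (s : Set (α ⊕ β)) : s.ncard = (Sum.inl ⁻¹' s).ncard + (Sum.inr ⁻¹' s).ncard := by
  conv_lhs => rw [← Set.image_preimage_inl_union_image_preimage_inr s]
  rw [Set.ncard_union_eq Set.disjoint_image_inl_image_inr,
    Set.ncard_image_of_injective _ Sum.inl_injective,
    Set.ncard_image_of_injective _ Sum.inr_injective]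

section BCJoin

variable {V₁ V₂ : Type*} (G₁ : SimpleGraph V₁) (G₂ : SimpleGraph V₂) (f : V₁ ≃ V₂)

/-- The graph built in `IsBC.step`. -/
def bcJoin : SimpleGraph (V₁ ⊕ V₂) :=
  fromRel fun u v =>
    (∃ a b, u = Sum.inl a ∧ v = Sum.inl b ∧ G₁.Adj a b) ∨
    (∃ a b, u = Sum.inr a ∧ v = Sum.inr b ∧ G₂.Adj a b) ∨
    (∃ a, u = Sum.inl a ∧ v = Sum.inr (f a))

variable {G₁ G₂ f} {a a' : V₁} {b b' : V₂}

@[simp]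
theorem bcJoin_adj_inl_inl : (bcJoin G₁ G₂ f).Adj (.inl a) (.inl a') ↔ G₁.Adj a a' := by
  simp +contextual [bcJoin, G₁.adj_comm a', G₁.ne_of_adj]

@[simp]
theorem bcJoin_adj_inr_inr : (bcJoin G₁ G₂ f).Adj (.inr b) (.inr b') ↔ G₂.Adj b b' := by
  simp +contextual [bcJoin, G₂.adj_comm b', G₂.ne_of_adj]

@[simp]
theorem bcJoin_adj_inl_inr : (bcJoin G₁ G₂ f).Adj (.inl a) (.inr b) ↔ f a = b := by
  simp [bcJoin, eq_comm]

@[simp]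
theorem bcJoin_adj_inr_inl : (bcJoin G₁ G₂ f).Adj (.inr b) (.inl a) ↔ f a = b := by
  rw [adj_comm, bcJoin_adj_inl_inr]

theorem bcJoin_ncard_neighborSet [Finite V₁] [Finite V₂] {n : ℕ}
    (h₁ : ∀ a, (G₁.neighborSet a).ncard = n) (h₂ : ∀ b, (G₂.neighborSet b).ncard = n)
    (v : V₁ ⊕ V₂) : ((bcJoin G₁ G₂ f).neighborSet v).ncard = n + 1 := by
  rw [Set.ncard_eq_ncard_preimage_inl_add_ncard_preimage_inr]
  rcases v with a | b
  · have hinl : Sum.inl ⁻¹' (bcJoin G₁ G₂ f).neighborSet (.inl a) = G₁.neighborSet a := by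
      ext; simp
    have hinr : Sum.inr ⁻¹' (bcJoin G₁ G₂ f).neighborSet (.inl a) = {f a} := by
      ext; simp [eq_comm]
    rw [hinl, hinr, h₁, Set.ncard_singleton]
  · have hinl : Sum.inl ⁻¹' (bcJoin G₁ G₂ f).neighborSet (.inr b) = {f.symm b} := by
      ext; simp [Equiv.eq_symm_apply]
    have hinr : Sum.inr ⁻¹' (bcJoin G₁ G₂ f).neighborSet (.inr b) = G₂.neighborSet b := by
      ext; simp
    rw [hinl, hinr, h₂, Set.ncard_singleton, add_comm]

theorem bcJoin_ncard_commonNeighbors_le [Finite V₁] [Finite V₂]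
    (h₁ : ∀ a a', a ≠ a' → (G₁.commonNeighbors a a').ncard ≤ 2)
    (h₂ : ∀ b b', b ≠ b' → (G₂.commonNeighbors b b').ncard ≤ 2)
    {u v : V₁ ⊕ V₂} (huv : u ≠ v) : ((bcJoin G₁ G₂ f).commonNeighbors u v).ncard ≤ 2 := by
  have mixed : ∀ a b, ((bcJoin G₁ G₂ f).commonNeighbors (.inl a) (.inr b)).ncard ≤ 2 := by
    intro a b
    have hinl : (Sum.inl ⁻¹' (bcJoin G₁ G₂ f).commonNeighbors (.inl a) (.inr b)).Subsingleton := by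
      intro c hc c' hc'
      simp [mem_commonNeighbors] at hc hc'
      exact f.injective (hc.2.trans hc'.2.symm)
    have hinr : (Sum.inr ⁻¹' (bcJoin G₁ G₂ f).commonNeighbors (.inl a) (.inr b)).Subsingleton := by
      intro c hc c' hc'
      simp [mem_commonNeighbors] at hc hc'
      exact hc.1.symm.trans hc'.1
    rw [Set.ncard_eq_ncard_preimage_inl_add_ncard_preimage_inr]
    linarith [Set.ncard_le_one_iff_subsingleton.2 hinl, Set.ncard_le_one_iff_subsingleton.2 hinr]
  rcases u with a | b <;> rcases v with a' | b'
  · have hinl : Sum.inl ⁻¹' (bcJoin G₁ G₂ f).commonNeighbors (.inl a) (.inl a') =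
        G₁.commonNeighbors a a' := by
      ext; simp [mem_commonNeighbors]
    have hinr : Sum.inr ⁻¹' (bcJoin G₁ G₂ f).commonNeighbors (.inl a) (.inl a') = ∅ := by
      ext; simp [mem_commonNeighbors]
      rintro rfl h
      exact huv (congrArg Sum.inl (f.injective h.symm))
    rw [Set.ncard_eq_ncard_preimage_inl_add_ncard_preimage_inr, hinl, hinr, Set.ncard_empty]
    exact h₁ a a' fun h => huv (congrArg Sum.inl h)
  · exact mixed a b'
  · rw [commonNeighbors_symm]
    exact mixed a' b
  · have hinl : Sum.inl ⁻¹' (bcJoin G₁ G₂ f).commonNeighbors (.inr b) (.inr b') = ∅ := by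
      ext; simp [mem_commonNeighbors]
      rintro rfl h
      exact huv (congrArg Sum.inr h)
    have hinr : Sum.inr ⁻¹' (bcJoin G₁ G₂ f).commonNeighbors (.inr b) (.inr b') =
        G₂.commonNeighbors b b' := by
      ext; simp [mem_commonNeighbors]
    rw [Set.ncard_eq_ncard_preimage_inl_add_ncard_preimage_inr, hinl, hinr, Set.ncard_empty,
      zero_add]
    exact h₂ b b' fun h => huv (congrArg Sum.inr h)

end BCJoin

section BCJoinDeletion

variable {V₁ V₂ : Type*} {G₁ : SimpleGraph V₁} {G₂ : SimpleGraph V₂} {f : V₁ ≃ V₂}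
  (S : Set (V₁ ⊕ V₂))

def bcJoinInl : G₁.induce (Sum.inl ⁻¹' S)ᶜ →g (bcJoin G₁ G₂ f).induce Sᶜ :=
  induceHom ⟨Sum.inl, bcJoin_adj_inl_inl.2⟩ fun _ h => h

def bcJoinInr : G₂.induce (Sum.inr ⁻¹' S)ᶜ →g (bcJoin G₁ G₂ f).induce Sᶜ :=
  induceHom ⟨Sum.inr, bcJoin_adj_inr_inr.2⟩ fun _ h => h

variable {S} {a : V₁} {b : V₂}

theorem bcJoin_preconnected_induce_compl (h₁ : (G₁.induce (Sum.inl ⁻¹' S)ᶜ).Preconnected)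
    (h₂ : (G₂.induce (Sum.inr ⁻¹' S)ᶜ).Preconnected) (ha : Sum.inl a ∉ S)
    (hfa : Sum.inr (f a) ∉ S) : ((bcJoin G₁ G₂ f).induce Sᶜ).Preconnected := by
  have hz : ∀ x, ((bcJoin G₁ G₂ f).induce Sᶜ).Reachable x ⟨.inl a, ha⟩ := by
    rintro ⟨x | x, hx⟩
    · exact (h₁ ⟨x, hx⟩ ⟨a, ha⟩).map (bcJoinInl S)
    · exact ((h₂ ⟨x, hx⟩ ⟨f a, hfa⟩).map (bcJoinInr S)).trans
        (Adj.reachable (bcJoin_adj_inr_inl.2 rfl))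
  exact fun x y => (hz x).trans (hz y).symm

theorem bcJoin_preconnectedUpToOne_of_left (h₁ : (G₁.induce (Sum.inl ⁻¹' S)ᶜ).Preconnected)
    (hS₁ : (Sum.inl ⁻¹' S).Subsingleton) (ha : Sum.inl a ∉ S) :
    ((bcJoin G₁ G₂ f).induce Sᶜ).PreconnectedUpToOne := by
  set C := ((bcJoin G₁ G₂ f).induce Sᶜ).connectedComponentMk ⟨.inl a, ha⟩
  have hL : ∀ a' (ha' : Sum.inl a' ∉ S), (⟨.inl a', ha'⟩ : ↥Sᶜ) ∈ C.supp := fun a' ha' =>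
    ConnectedComponent.sound ((h₁ ⟨a', ha'⟩ ⟨a, ha⟩).map (bcJoinInl S))
  have hR : ∀ b' (hb' : Sum.inr b' ∉ S), (⟨.inr b', hb'⟩ : ↥Sᶜ) ∉ C.supp →
      f.symm b' ∈ Sum.inl ⁻¹' S := by
    intro b' hb' hbC
    by_contra hfb
    exact hbC (C.mem_supp_of_adj_mem_supp (hL _ hfb) (by simp))
  refine ⟨C, ?_⟩
  rintro ⟨x | x, hx⟩ hxC ⟨y | y, hy⟩ hyC
  · exact absurd (hL x hx) hxC
  · exact absurd (hL x hx) hxC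
  · exact absurd (hL y hy) hyC
  · obtain rfl := f.symm.injective (hS₁ (hR x hx hxC) (hR y hy hyC))
    rfl

theorem bcJoin_preconnectedUpToOne_of_right (h₂ : (G₂.induce (Sum.inr ⁻¹' S)ᶜ).Preconnected)
    (hS₂ : (Sum.inr ⁻¹' S).Subsingleton) (hb : Sum.inr b ∉ S) :
    ((bcJoin G₁ G₂ f).induce Sᶜ).PreconnectedUpToOne := by
  set C := ((bcJoin G₁ G₂ f).induce Sᶜ).connectedComponentMk ⟨.inr b, hb⟩
  have hR : ∀ b' (hb' : Sum.inr b' ∉ S), (⟨.inr b', hb'⟩ : ↥Sᶜ) ∈ C.supp := fun b' hb' =>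
    ConnectedComponent.sound ((h₂ ⟨b', hb'⟩ ⟨b, hb⟩).map (bcJoinInr S))
  have hL : ∀ a' (ha' : Sum.inl a' ∉ S), (⟨.inl a', ha'⟩ : ↥Sᶜ) ∉ C.supp →
      f a' ∈ Sum.inr ⁻¹' S := by
    intro a' ha' haC
    by_contra hfa
    exact haC (C.mem_supp_of_adj_mem_supp (hR _ hfa) (by simp))
  refine ⟨C, ?_⟩
  rintro ⟨x | x, hx⟩ hxC ⟨y | y, hy⟩ hyC
  · obtain rfl := f.injective (hS₂ (hL x hx hxC) (hL y hy hyC))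
    rfl
  · exact absurd (hR y hy) hyC
  · exact absurd (hR x hx) hxC
  · exact absurd (hR x hx) hxC

theorem bcJoin_preconnectedUpToOne [Finite V₁] [Finite V₂] {n : ℕ}
    (hdeg₁ : ∀ a, (G₁.neighborSet a).ncard = n) (hdeg₂ : ∀ b, (G₂.neighborSet b).ncard = n)
    (hS : S.ncard < 2 * n) (hV : S.ncard + 2 < Nat.card V₁)
    (h₁ : (G₁.induce (Sum.inl ⁻¹' S)ᶜ).PreconnectedUpToOne)
    (h₂ : (G₂.induce (Sum.inr ⁻¹' S)ᶜ).PreconnectedUpToOne) :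
    ((bcJoin G₁ G₂ f).induce Sᶜ).PreconnectedUpToOne := by
  obtain ⟨C₁, hC₁⟩ := h₁
  obtain ⟨C₂, hC₂⟩ := h₂
  have hsplit := Set.ncard_eq_ncard_preimage_inl_add_ncard_preimage_inr S
  obtain ⟨_, ⟨⟨a, ha⟩, haC, rfl⟩, ⟨_, hfa⟩, hfaC, hfa_eq⟩ :=
    exists_mem_image_val_supp_of_ncard_lt f hC₁ hC₂ (by omega)
  obtain rfl : _ = f a := hfa_eq
  -- `C` contains the big components of both halves, glued by the matching edge at `a`.
  set C := C₁.map (bcJoinInl (G₂ := G₂) (f := f) S)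
  have haC' : (⟨.inl a, ha⟩ : ↥Sᶜ) ∈ C.supp :=
    ConnectedComponent.apply_mem_supp_map (bcJoinInl S) haC
  have hfaC' : (⟨.inr (f a), hfa⟩ : ↥Sᶜ) ∈ C.supp :=
    C.mem_supp_of_adj_mem_supp haC' (bcJoin_adj_inl_inr.2 rfl)
  have hL' : ∀ x (hx : Sum.inl x ∉ S), (⟨.inl x, hx⟩ : ↥Sᶜ) ∉ C.supp →
      (⟨x, hx⟩ : ↥(Sum.inl ⁻¹' S)ᶜ) ∉ C₁.supp := fun x hx hxC h =>
    hxC (ConnectedComponent.apply_mem_supp_map (bcJoinInl S) h)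
  have hR' : ∀ y (hy : Sum.inr y ∉ S), (⟨.inr y, hy⟩ : ↥Sᶜ) ∉ C.supp →
      (⟨y, hy⟩ : ↥(Sum.inr ⁻¹' S)ᶜ) ∉ C₂.supp := fun y hy hyC h =>
    hyC ((ConnectedComponent.sound ((C₂.reachable_of_mem_supp h hfaC).map (bcJoinInr S))).trans
      hfaC')
  have hn₁ : ∀ x (hx : Sum.inl x ∉ S), (⟨.inl x, hx⟩ : ↥Sᶜ) ∉ C.supp →
      n ≤ (Sum.inl ⁻¹' S).ncard := fun x hx hxC =>
    hdeg₁ x ▸ Set.ncard_le_ncard (neighborSet_subset_of_notMem_supp hC₁ hx (hL' x hx hxC))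
  have hn₂ : ∀ y (hy : Sum.inr y ∉ S), (⟨.inr y, hy⟩ : ↥Sᶜ) ∉ C.supp →
      n ≤ (Sum.inr ⁻¹' S).ncard := fun y hy hyC =>
    hdeg₂ y ▸ Set.ncard_le_ncard (neighborSet_subset_of_notMem_supp hC₂ hy (hR' y hy hyC))
  refine ⟨C, ?_⟩
  rintro ⟨x | x, hx⟩ hxC ⟨y | y, hy⟩ hyC
  · obtain rfl : x = y := congrArg Subtype.val (hC₁ (hL' x hx hxC) (hL' y hy hyC))
    rfl
  · linarith [hn₁ x hx hxC, hn₂ y hy hyC]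
  · linarith [hn₂ x hx hxC, hn₁ y hy hyC]
  · obtain rfl : x = y := congrArg Subtype.val (hC₂ (hR' x hx hxC) (hR' y hy hyC))
    rfl

end BCJoinDeletion

theorem Nat.two_mul_add_two_le_two_pow {n : ℕ} (hn : 3 ≤ n) : 2 * n + 2 ≤ 2 ^ n := by
  induction n, hn using Nat.le_induction with
  | base => norm_num
  | succ k _ ih => rw [pow_succ]; omega

theorem Nat.four_mul_le_two_pow {n : ℕ} (hn : 4 ≤ n) : 4 * n ≤ 2 ^ n := by
  induction n, hn using Nat.le_induction with
  | base => norm_num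
  | succ k _ ih => rw [pow_succ]; omega

theorem PessDiag.le_ncard_of_ncard_supp_eq_two {V : Type*} {G : SimpleGraph V} {t : ℕ}
    (h : PessDiag G t) {S : Set V} (C : (G.induce Sᶜ).ConnectedComponent)
    (hC : C.supp.ncard = 2) : t ≤ S.ncard := by
  by_contra! hlt
  have := (h S hlt).2 C hC.ge
  omega

namespace IsBC

variable {n : ℕ} {V : Type} {G : SimpleGraph V}

theorem finite (h : IsBC n V G) : Finite V := by
  induction h with
  | base => infer_instance
  | step _ _ _ _ _ ih₁ ih₂ =>
    have := ih₁
    have := ih₂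
    infer_instance

theorem one_le (h : IsBC n V G) : 1 ≤ n := by
  induction h <;> omega

theorem card (h : IsBC n V G) : Nat.card V = 2 ^ n := by
  induction h with
  | base => simp
  | step _ _ _ h₁ h₂ ih₁ ih₂ =>
    have := h₁.finite
    have := h₂.finite
    rw [Nat.card_sum, ih₁, ih₂, pow_succ, mul_two]

theorem ncard_neighborSet (h : IsBC n V G) (v : V) : (G.neighborSet v).ncard = n := by
  induction h with
  | base => cases v <;> simp [neighborSet]
  | step _ _ _ h₁ h₂ ih₁ ih₂ =>
    have := h₁.finite
    have := h₂.finite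
    exact bcJoin_ncard_neighborSet ih₁ ih₂ v

theorem ncard_commonNeighbors_le (h : IsBC n V G) {u v : V} (huv : u ≠ v) :
    (G.commonNeighbors u v).ncard ≤ 2 := by
  induction h with
  | base => exact (Set.ncard_le_ncard (Set.subset_univ _)).trans (by simp)
  | step _ _ _ h₁ h₂ ih₁ ih₂ =>
    have := h₁.finite
    have := h₂.finite
    exact bcJoin_ncard_commonNeighbors_le (fun _ _ => ih₁) (fun _ _ => ih₂) huv

theorem preconnected_induce_compl (h : IsBC n V G) {S : Set V} (hS : S.ncard ≤ 1) :
    (G.induce Sᶜ).Preconnected := by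
  induction h with
  | base =>
    intro x y
    by_cases hxy : x = y
    · exact hxy ▸ Reachable.refl x
    · exact Adj.reachable (by simpa [Subtype.ext_iff] using hxy)
  | @step m _ _ _ _ f h₁ h₂ ih₁ ih₂ =>
    have := h₁.finite
    have := h₂.finite
    have := h₁.card
    have := Nat.one_lt_two_pow_iff.2 (by have := h₁.one_le; omega : m ≠ 0)
    have hsplit := Set.ncard_eq_ncard_preimage_inl_add_ncard_preimage_inr S
    obtain ⟨a, -, ha⟩ := Set.exists_mem_notMem_of_ncard_lt_ncard
      (s := Sum.inl ⁻¹' S ∪ f ⁻¹' (Sum.inr ⁻¹' S)) (t := Set.univ) (by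
        rw [Set.ncard_univ]
        calc _ ≤ _ := Set.ncard_union_le _ _
          _ = (Sum.inl ⁻¹' S).ncard + (Sum.inr ⁻¹' S).ncard := by
            rw [Set.ncard_preimage_of_injective_subset_range f.injective (by simp)]
          _ < _ := by omega)
    rw [Set.mem_union, not_or] at ha
    exact bcJoin_preconnected_induce_compl (ih₁ (by omega)) (ih₂ (by omega)) ha.1 ha.2

theorem preconnectedUpToOne (h : IsBC n V G) {S : Set V} (hS : S.ncard + 3 ≤ 2 * n) :
    (G.induce Sᶜ).PreconnectedUpToOne := by
  induction h with
  | base => omega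
  | @step m _ _ _ _ f h₁ h₂ ih₁ ih₂ =>
    have := h₁.finite
    have := h₂.finite
    have hcard₁ := h₁.card
    have hcard₂ := h₂.card
    have := Nat.one_lt_two_pow_iff.2 (by have := h₁.one_le; omega : m ≠ 0)
    have hsplit := Set.ncard_eq_ncard_preimage_inl_add_ncard_preimage_inr S
    by_cases hS₂ : (Sum.inr ⁻¹' S).ncard ≤ 1
    · obtain ⟨b, -, hb⟩ := Set.exists_mem_notMem_of_ncard_lt_ncard (s := Sum.inr ⁻¹' S)
        (t := Set.univ) (by rw [Set.ncard_univ]; omega)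
      exact bcJoin_preconnectedUpToOne_of_right (h₂.preconnected_induce_compl hS₂)
        (Set.ncard_le_one_iff_subsingleton.1 hS₂) hb
    by_cases hS₁ : (Sum.inl ⁻¹' S).ncard ≤ 1
    · obtain ⟨a, -, ha⟩ := Set.exists_mem_notMem_of_ncard_lt_ncard (s := Sum.inl ⁻¹' S)
        (t := Set.univ) (by rw [Set.ncard_univ]; omega)
      exact bcJoin_preconnectedUpToOne_of_left (h₁.preconnected_induce_compl hS₁)
        (Set.ncard_le_one_iff_subsingleton.1 hS₁) ha
    have := Nat.two_mul_add_two_le_two_pow (n := m) (by omega)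
    exact bcJoin_preconnectedUpToOne h₁.ncard_neighborSet h₂.ncard_neighborSet (by omega)
      (by omega) (ih₁ (by omega)) (ih₂ (by omega))

theorem le_ncard_of_isOneExtraCut (h : IsBC n V G) {S : Set V} (hS : IsOneExtraCut G S) :
    2 * n - 2 ≤ S.ncard := by
  have := h.finite
  by_contra! hlt
  exact hS.1 ((h.preconnectedUpToOne (by omega)).preconnected hS.2)

theorem exists_isOneExtraCut (h : IsBC n V G) (hn : 5 ≤ n) :
    ∃ S : Set V, IsOneExtraCut G S ∧ S.ncard = 2 * n - 2 ∧
      ∃ C : (G.induce Sᶜ).ConnectedComponent, C.supp.ncard = 2 := by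
  have := h.finite
  have hcard := h.card
  have := Nat.four_mul_le_two_pow (n := n) (by omega)
  obtain ⟨u⟩ : Nonempty V := Nat.card_pos_iff.1 (by omega) |>.1
  obtain ⟨v, huv⟩ : (G.neighborSet u).Nonempty :=
    Set.nonempty_of_ncard_ne_zero (by rw [h.ncard_neighborSet]; omega)
  obtain ⟨z, -, hz⟩ := Set.exists_mem_notMem_of_ncard_lt_ncard
    (s := G.neighborSet u ∪ G.neighborSet v) (t := Set.univ) (by
      rw [Set.ncard_univ]
      linarith [Set.ncard_union_le (G.neighborSet u) (G.neighborSet v), h.ncard_neighborSet u,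
        h.ncard_neighborSet v])
  have hcut := isOneExtraCut_edgeNeighborSet huv (fun x => h.ncard_neighborSet x ▸ hn)
    (fun _ _ => h.ncard_commonNeighbors_le) hz
  refine ⟨_, hcut, le_antisymm ?_ (h.le_ncard_of_isOneExtraCut hcut), _,
    (supp_connectedComponentMk_induce_compl_edgeNeighborSet huv).symm ▸
      Set.ncard_pair fun huv' => huv.ne (congrArg Subtype.val huv')⟩
  have := ncard_edgeNeighborSet_le huv
  rw [h.ncard_neighborSet, h.ncard_neighborSet] at this
  omega

theorem pessDiag (h : IsBC n V G) (hn : 5 ≤ n) : PessDiag G (2 * n - 2) := by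
  intro S hS
  have := h.finite
  have := Nat.four_mul_le_two_pow (n := n) (by omega)
  have hcard : Nat.card ↥Sᶜ + S.ncard = 2 ^ n := by
    rw [Nat.card_coe_set_eq, Set.ncard_compl_add_ncard, h.card]
  have hUp := h.preconnectedUpToOne (S := S) (by omega)
  refine ⟨hUp.subsingleton_setOf_ncard_supp_eq_one (by omega), fun C hC => ?_⟩
  have := hUp.card_le_ncard_supp_add_one hC
  omega

end IsBC

/-- For any `n`-dimensional BC network `X_n ∈ L_n` with `n ≥ 5`, the
pessimistic diagnosability and the 1-extra connectivity of `X_n` both equal `2n − 2`. -/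
theorem bcNetwork_tp_eq_extraConn (n : ℕ) (hn : 5 ≤ n) (V : Type) (G : SimpleGraph V)
    (hG : IsBC n V G) :
    pessDiagnosability G = 2 * n - 2 ∧ extraConn1 G = 2 * n - 2 := by
  obtain ⟨S₀, hcut, hcard, C, hC⟩ := hG.exists_isOneExtraCut hn
  refine ⟨IsGreatest.csSup_eq ⟨hG.pessDiag hn, fun t ht => ?_⟩,
    IsLeast.csInf_eq ⟨⟨S₀, hcut, hcard⟩, ?_⟩⟩
  · exact hcard ▸ ht.le_ncard_of_ncard_supp_eq_two C hC
  · rintro m ⟨S, hS, rfl⟩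
    exact hG.le_ncard_of_isOneExtraCut hS
end

section
/- Let Q_n^3 be the 3-ary n-cube with n ≥ 3. If U ⊆ V(Q_n^3) with 2 ≤ |U| ≤ 8n − 10, then |N_{Q_n^3}(U)| ≥ 4n − 3. -/
open SimpleGraph

/-- The `k`-ary `n`-cube `Q_n^k`: vertices are elements of `(ℤ/kℤ)^n`, with two vertices
adjacent iff they differ in exactly one coordinate, and in that coordinate the entries
differ by `±1 (mod k)`. -/
def karyNCube (n k : ℕ) : SimpleGraph (Fin n → ZMod k) :=
  SimpleGraph.fromRel (fun u v => ∃ j : Fin n,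
    (u j = v j + 1 ∨ u j = v j - 1) ∧ ∀ i : Fin n, i ≠ j → u i = v i)

lemma adj_iff {n : ℕ} {u v : Fin n → ZMod 3} :
    (karyNCube n 3).Adj u v ↔ ∃ j, u j ≠ v j ∧ ∀ i, i ≠ j → u i = v i := by
  have h3 : ∀ a b : ZMod 3, (a = b + 1 ∨ a = b - 1) ↔ a ≠ b := by decide
  rw [karyNCube, fromRel_adj]
  constructor
  · rintro ⟨hne, h | h⟩
    · obtain ⟨j, hj, hrest⟩ := h
      exact ⟨j, (h3 _ _).mp hj, hrest⟩
    · obtain ⟨j, hj, hrest⟩ := h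
      exact ⟨j, Ne.symm ((h3 _ _).mp hj), fun i hi => (hrest i hi).symm⟩
  · rintro ⟨j, hj, hrest⟩
    exact ⟨fun he => hj (congrFun he j), Or.inl ⟨j, (h3 _ _).mpr hj, hrest⟩⟩

instance {n : ℕ} : DecidableRel (karyNCube n 3).Adj :=
  fun _ _ => decidable_of_iff _ adj_iff.symm

lemma adj_cons {n : ℕ} {a b : ZMod 3} {y z : Fin n → ZMod 3} :
    (karyNCube (n+1) 3).Adj (Fin.cons a y) (Fin.cons b z) ↔
      (a = b ∧ (karyNCube n 3).Adj y z) ∨ (a ≠ b ∧ y = z) := by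
  rw [adj_iff, adj_iff]
  constructor
  · rintro ⟨j, hj, hrest⟩
    rcases Fin.eq_zero_or_eq_succ j with rfl | ⟨i, rfl⟩
    · refine Or.inr ⟨by simpa using hj, funext fun i => ?_⟩
      have := hrest i.succ (Fin.succ_ne_zero i)
      simpa using this
    · refine Or.inl ⟨by simpa using hrest 0 (Fin.succ_ne_zero i).symm, i, by simpa using hj, ?_⟩
      intro i' hi'
      have := hrest i'.succ (by simpa [Fin.succ_inj] using hi')
      simpa using this
  · rintro (⟨rfl, j, hj, hrest⟩ | ⟨hab, rfl⟩)
    · refine ⟨j.succ, by simpa using hj, ?_⟩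
      intro i hi
      rcases Fin.eq_zero_or_eq_succ i with rfl | ⟨i', rfl⟩
      · simp
      · have := hrest i' (by simpa [Fin.succ_inj] using hi)
        simpa using this
    · exact ⟨0, by simpa using hab, fun i hi => by
        rcases Fin.eq_zero_or_eq_succ i with rfl | ⟨i', rfl⟩
        · exact absurd rfl hi
        · simp⟩

def consF {n : ℕ} (a : ZMod 3) (y : Fin n → ZMod 3) : Fin (n+1) → ZMod 3 :=
  Fin.cons a y

def layer {n : ℕ} (a : ZMod 3) (S : Set (Fin (n+1) → ZMod 3)) : Set (Fin n → ZMod 3) :=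
  {y | consF a y ∈ S}

lemma zmod3_cases : ∀ z : ZMod 3, z = 0 ∨ z = 1 ∨ z = 2 := by decide

lemma consF_inj {n : ℕ} (a : ZMod 3) : Function.Injective (consF (n := n) a) := by
  intro y z h
  funext i
  have := congrFun h i.succ
  simpa [consF] using this

lemma ncard_eq_sum_layers {n : ℕ} (S : Set (Fin (n+1) → ZMod 3)) :
    S.ncard = (layer 0 S).ncard + (layer 1 S).ncard + (layer 2 S).ncard := by
  have himg : ∀ a : ZMod 3, (consF a '' (layer a S)).ncard
      = (layer a S).ncard := fun a => Set.ncard_image_of_injective _ (consF_inj a)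
  have hdisj : ∀ a b : ZMod 3, a ≠ b →
      Disjoint (consF a '' (layer (n := n) a S)) (consF b '' (layer b S)) := by
    intro a b hab
    rw [Set.disjoint_left]
    rintro x ⟨y, _, rfl⟩ ⟨z, _, hz⟩
    exact hab (by simpa [consF] using (congrFun hz 0).symm)
  have hdecomp : S = (consF 0 '' (layer 0 S)) ∪ (consF 1 '' (layer 1 S)) ∪
      (consF 2 '' (layer 2 S)) := by
    ext x
    constructor
    · intro hx
      have hx0 := zmod3_cases (x 0)
      have hre : ∀ a : ZMod 3, x 0 = a → x ∈ consF a '' (layer a S) := by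
        intro a ha
        refine ⟨Fin.tail x, ?_, ?_⟩
        · show consF a (Fin.tail x) ∈ S
          rw [consF, ← ha, Fin.cons_self_tail]; exact hx
        · rw [consF, ← ha]; exact Fin.cons_self_tail x
      rcases hx0 with h | h | h
      · exact Or.inl (Or.inl (hre _ h))
      · exact Or.inl (Or.inr (hre _ h))
      · exact Or.inr (hre _ h)
    · rintro ((⟨y, hy, rfl⟩ | ⟨y, hy, rfl⟩) | ⟨y, hy, rfl⟩) <;> exact hy
  have key : ((consF 0 '' (layer 0 S)) ∪ (consF 1 '' (layer 1 S)) ∪ (consF 2 '' (layer 2 S))).ncard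
      = (layer 0 S).ncard + (layer 1 S).ncard + (layer 2 S).ncard := by
    rw [Set.ncard_union_eq ?d1 (Set.toFinite _) (Set.toFinite _),
        Set.ncard_union_eq (hdisj 0 1 (by decide)) (Set.toFinite _) (Set.toFinite _),
        himg, himg, himg]
    case d1 =>
      rw [Set.disjoint_union_left]
      exact ⟨hdisj 0 2 (by decide), hdisj 1 2 (by decide)⟩
  conv_lhs => rw [hdecomp]
  exact key

lemma nbhd_layer_subset {n : ℕ} (a : ZMod 3) (U : Set (Fin (n+1) → ZMod 3)) :
    setNbhd (karyNCube n 3) (layer a U) ⊆ layer a (setNbhd (karyNCube (n+1) 3) U) := by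
  rintro y ⟨hy, z, hz, hadj⟩
  refine ⟨hy, consF a z, hz, ?_⟩
  show (karyNCube (n+1) 3).Adj (Fin.cons a z) (Fin.cons a y)
  exact adj_cons.mpr (Or.inl ⟨rfl, hadj⟩)

lemma cross_layer_subset {n : ℕ} {a b : ZMod 3} (hab : a ≠ b) (U : Set (Fin (n+1) → ZMod 3)) :
    (layer b U) \ (layer a U) ⊆ layer a (setNbhd (karyNCube (n+1) 3) U) := by
  rintro y ⟨hyb, hya⟩
  refine ⟨hya, consF b y, hyb, ?_⟩
  show (karyNCube (n+1) 3).Adj (Fin.cons b y) (Fin.cons a y)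
  exact adj_cons.mpr (Or.inr ⟨hab.symm, rfl⟩)

lemma cross_bound {n : ℕ} {a b : ZMod 3} (hab : a ≠ b) (U : Set (Fin (n+1) → ZMod 3)) :
    (layer b U).ncard ≤ (layer a (setNbhd (karyNCube (n+1) 3) U)).ncard + (layer a U).ncard := by
  have h1 : (layer b U) ⊆ ((layer b U) \ (layer a U)) ∪ (layer a U) := by
    intro x hx
    by_cases h : x ∈ layer a U
    · exact Or.inr h
    · exact Or.inl ⟨hx, h⟩
  calc (layer b U).ncard ≤ (((layer b U) \ (layer a U)) ∪ (layer a U)).ncard :=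
        Set.ncard_le_ncard h1 (Set.toFinite _)
    _ ≤ ((layer b U) \ (layer a U)).ncard + (layer a U).ncard := Set.ncard_union_le _ _
    _ ≤ _ := by
        have := Set.ncard_le_ncard (cross_layer_subset hab U) (Set.toFinite
          (layer a (setNbhd (karyNCube (n+1) 3) U)))
        omega

lemma nbhd_layer_bound {n : ℕ} (a : ZMod 3) (U : Set (Fin (n+1) → ZMod 3)) :
    (setNbhd (karyNCube n 3) (layer a U)).ncard ≤ (layer a (setNbhd (karyNCube (n+1) 3) U)).ncard :=
  Set.ncard_le_ncard (nbhd_layer_subset a U) (Set.toFinite _)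

lemma degree_bound {n : ℕ} (v : Fin n → ZMod 3) :
    2 * n ≤ (setNbhd (karyNCube n 3) {v}).ncard := by
  classical
  set f : Fin n × Fin 2 → (Fin n → ZMod 3) :=
    fun p => Function.update v p.1 (v p.1 + ((p.2 : ℕ) + 1 : ZMod 3)) with hf
  have hne : ∀ c : Fin 2, (((c : ℕ) + 1 : ZMod 3)) ≠ 0 := by decide
  have hcc : ∀ c c' : Fin 2, (((c : ℕ) + 1 : ZMod 3)) = (((c' : ℕ) + 1 : ZMod 3)) → c = c' := by
    decide
  have hinj : Function.Injective f := by
    rintro ⟨j, c⟩ ⟨j', c'⟩ h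
    have hj := congrFun h j
    by_cases hjj : j = j'
    · subst hjj
      simp only [hf, Function.update_self] at hj
      have := hcc c c' (add_left_cancel hj)
      simp [this]
    · exfalso
      simp only [hf, Function.update_self, Function.update_of_ne hjj] at hj
      exact hne c (add_eq_left.mp hj)
  have hsub : Set.range f ⊆ setNbhd (karyNCube n 3) {v} := by
    rintro _ ⟨⟨j, c⟩, rfl⟩
    have hval : f (j, c) j = v j + ((c : ℕ) + 1 : ZMod 3) := by
      simp [hf, Function.update_self]
    constructor
    · simp only [Set.mem_singleton_iff]
      intro h
      have := congrFun h j
      rw [hval] at this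
      exact hne c (add_eq_left.mp this)
    · refine ⟨v, rfl, adj_iff.mpr ⟨j, ?_, ?_⟩⟩
      · rw [hval]
        intro h
        exact hne c (add_eq_left.mp h.symm)
      · intro i hi
        simp [hf, Function.update_of_ne hi]
  calc 2 * n = Nat.card (Fin n × Fin 2) := by simp [Nat.card_eq_fintype_card, Nat.mul_comm]
    _ = Nat.card (Set.range f) := (Nat.card_range_of_injective hinj).symm
    _ = (Set.range f).ncard := Nat.card_coe_set_eq _
    _ ≤ _ := Set.ncard_le_ncard hsub (Set.toFinite _)

def nbhdF (S : Finset (Fin 2 → ZMod 3)) : Finset (Fin 2 → ZMod 3) :=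
  Finset.univ.filter (fun v => v ∉ S ∧ ∃ u ∈ S, (karyNCube 2 3).Adj u v)

set_option maxHeartbeats 2000000 in
set_option maxRecDepth 100000 in
lemma rook_facts : ∀ S : Finset (Fin 2 → ZMod 3),
    (2 ≤ S.card → S.card ≤ 3 → 5 ≤ (nbhdF S).card) ∧
    (4 ≤ S.card → S.card ≤ 5 → 4 ≤ (nbhdF S).card) ∧
    (6 ≤ S.card → 9 ≤ S.card + (nbhdF S).card) := by decide

lemma setNbhd_eq_nbhdF (S : Set (Fin 2 → ZMod 3)) :
    (setNbhd (karyNCube 2 3) S).ncard = (nbhdF S.toFinite.toFinset).card := by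
  rw [← Set.ncard_coe_finset]
  congr 1
  ext v
  simp [setNbhd, nbhdF, Set.Finite.mem_toFinset]

lemma rook_layer_facts (S : Set (Fin 2 → ZMod 3)) :
    (2 ≤ S.ncard → S.ncard ≤ 3 → 5 ≤ (setNbhd (karyNCube 2 3) S).ncard) ∧
    (4 ≤ S.ncard → S.ncard ≤ 5 → 4 ≤ (setNbhd (karyNCube 2 3) S).ncard) ∧
    (6 ≤ S.ncard → 9 ≤ S.ncard + (setNbhd (karyNCube 2 3) S).ncard) := by
  have h := rook_facts S.toFinite.toFinset
  rw [← Set.ncard_eq_toFinset_card S S.toFinite, ← setNbhd_eq_nbhdF] at h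
  exact h

lemma ncard_le_nine (S : Set (Fin 2 → ZMod 3)) : S.ncard ≤ 9 := by
  have h := Set.ncard_le_ncard (Set.subset_univ S) (Set.toFinite _)
  have h9 : (Set.univ : Set (Fin 2 → ZMod 3)).ncard = 9 := by
    rw [Set.ncard_univ, Nat.card_eq_fintype_card]
    decide
  omega

lemma two_bound : ∀ n, 2 ≤ n → ∀ u v : Fin n → ZMod 3, u ≠ v →
    4 * n - 3 ≤ (setNbhd (karyNCube n 3) {u, v}).ncard := by
  intro n hn
  induction n, hn using Nat.le_induction with
  | base =>
    intro u v huv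
    have h := (rook_layer_facts {u, v}).1
    have hcard : ({u, v} : Set (Fin 2 → ZMod 3)).ncard = 2 := Set.ncard_pair huv
    omega
  | succ n hn IH =>
    intro u v huv
    set U : Set (Fin (n+1) → ZMod 3) := {u, v} with hU
    have hUsum := ncard_eq_sum_layers U
    have hBsum := ncard_eq_sum_layers (setNbhd (karyNCube (n+1) 3) U)
    have hU2 : U.ncard = 2 := Set.ncard_pair huv
    have h1 : ∀ c : ZMod 3, (layer c U).ncard = 1 →
        2 * n ≤ (layer c (setNbhd (karyNCube (n+1) 3) U)).ncard := by
      intro c h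
      obtain ⟨w, hw⟩ := Set.ncard_eq_one.mp h
      have hd := degree_bound (n := n) w
      rw [← hw] at hd
      exact hd.trans (nbhd_layer_bound c U)
    have h2 : ∀ c : ZMod 3, (layer c U).ncard = 2 →
        4 * n - 3 ≤ (layer c (setNbhd (karyNCube (n+1) 3) U)).ncard := by
      intro c h
      obtain ⟨w, w', hww, hw⟩ := Set.ncard_eq_two.mp h
      have hd := IH w w' hww
      rw [← hw] at hd
      exact hd.trans (nbhd_layer_bound c U)
    have hc01 := cross_bound (a := 0) (b := 1) (by decide) U
    have hc02 := cross_bound (a := 0) (b := 2) (by decide) U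
    have hc10 := cross_bound (a := 1) (b := 0) (by decide) U
    have hc12 := cross_bound (a := 1) (b := 2) (by decide) U
    have hc20 := cross_bound (a := 2) (b := 0) (by decide) U
    have hc21 := cross_bound (a := 2) (b := 1) (by decide) U
    have h10 := h1 0; have h11 := h1 1; have h12 := h1 2
    have h20 := h2 0; have h21 := h2 1; have h22 := h2 2
    omega

lemma main_aux : ∀ n, 3 ≤ n → ∀ U : Set (Fin n → ZMod 3), 2 ≤ U.ncard → U.ncard ≤ 8 * n - 10 →
    4 * n - 3 ≤ (setNbhd (karyNCube n 3) U).ncard := by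
  intro n hn
  induction n, hn using Nat.le_induction with
  | base =>
    intro U hU1 hU2
    rcases eq_or_lt_of_le hU1 with h2 | h3
    · obtain ⟨u, v, huv, rfl⟩ := Set.ncard_eq_two.mp h2.symm
      exact two_bound 3 (by norm_num) u v huv
    · show 4 * 3 - 3 ≤ (setNbhd (karyNCube (2+1) 3) U).ncard
      have hUsum := ncard_eq_sum_layers (n := 2) U
      have hBsum := ncard_eq_sum_layers (n := 2) (setNbhd (karyNCube (2+1) 3) U)
      have hdeg : ∀ c : ZMod 3, (layer c U).ncard = 1 →
          4 ≤ (layer c (setNbhd (karyNCube (2+1) 3) U)).ncard := by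
        intro c h
        obtain ⟨w, hw⟩ := Set.ncard_eq_one.mp h
        have hd := degree_bound (n := 2) w
        rw [← hw] at hd
        exact hd.trans (nbhd_layer_bound c U)
      have hrk : ∀ c : ZMod 3,
          (2 ≤ (layer c U).ncard → (layer c U).ncard ≤ 3 →
            5 ≤ (layer c (setNbhd (karyNCube (2+1) 3) U)).ncard) ∧
          (4 ≤ (layer c U).ncard → (layer c U).ncard ≤ 5 →
            4 ≤ (layer c (setNbhd (karyNCube (2+1) 3) U)).ncard) ∧
          (6 ≤ (layer c U).ncard →
            9 ≤ (layer c U).ncard + (layer c (setNbhd (karyNCube (2+1) 3) U)).ncard) := by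
        intro c
        have h := rook_layer_facts (layer c U)
        have hb := nbhd_layer_bound c U
        exact ⟨fun a b => (h.1 a b).trans hb, fun a b => (h.2.1 a b).trans hb,
          fun a => (h.2.2 a).trans (by omega)⟩
      have hc01 := cross_bound (n := 2) (a := 0) (b := 1) (by decide) U
      have hc02 := cross_bound (n := 2) (a := 0) (b := 2) (by decide) U
      have hc10 := cross_bound (n := 2) (a := 1) (b := 0) (by decide) U
      have hc12 := cross_bound (n := 2) (a := 1) (b := 2) (by decide) U
      have hc20 := cross_bound (n := 2) (a := 2) (b := 0) (by decide) U
      have hc21 := cross_bound (n := 2) (a := 2) (b := 1) (by decide) U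
      have hn0 := ncard_le_nine (layer 0 U)
      have hn1 := ncard_le_nine (layer 1 U)
      have hn2 := ncard_le_nine (layer 2 U)
      have hd0 := hdeg 0; have hd1 := hdeg 1; have hd2 := hdeg 2
      have hr0 := hrk 0; have hr1 := hrk 1; have hr2 := hrk 2
      obtain ⟨hr0a, hr0b, hr0c⟩ := hr0
      obtain ⟨hr1a, hr1b, hr1c⟩ := hr1
      obtain ⟨hr2a, hr2b, hr2c⟩ := hr2
      omega
  | succ n hn IH =>
    intro U hU1 hU2
    rcases eq_or_lt_of_le hU1 with h2 | h3
    · obtain ⟨u, v, huv, rfl⟩ := Set.ncard_eq_two.mp h2.symm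
      exact two_bound (n+1) (by omega) u v huv
    · have hUsum := ncard_eq_sum_layers U
      have hBsum := ncard_eq_sum_layers (setNbhd (karyNCube (n+1) 3) U)
      have h1 : ∀ c : ZMod 3, (layer c U).ncard = 1 →
          2 * n ≤ (layer c (setNbhd (karyNCube (n+1) 3) U)).ncard := by
        intro c h
        obtain ⟨w, hw⟩ := Set.ncard_eq_one.mp h
        have hd := degree_bound (n := n) w
        rw [← hw] at hd
        exact hd.trans (nbhd_layer_bound c U)
      have h2 : ∀ c : ZMod 3, 2 ≤ (layer c U).ncard → (layer c U).ncard ≤ 8 * n - 10 →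
          4 * n - 3 ≤ (layer c (setNbhd (karyNCube (n+1) 3) U)).ncard := by
        intro c ha hb
        exact (IH (layer c U) ha hb).trans (nbhd_layer_bound c U)
      have hc01 := cross_bound (a := 0) (b := 1) (by decide) U
      have hc02 := cross_bound (a := 0) (b := 2) (by decide) U
      have hc10 := cross_bound (a := 1) (b := 0) (by decide) U
      have hc12 := cross_bound (a := 1) (b := 2) (by decide) U
      have hc20 := cross_bound (a := 2) (b := 0) (by decide) U
      have hc21 := cross_bound (a := 2) (b := 1) (by decide) U
      have h10 := h1 0; have h11 := h1 1; have h12 := h1 2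
      have h20 := h2 0; have h21 := h2 1; have h22 := h2 2
      omega

/-- For the 3-ary `n`-cube `Q_n^3` with `n ≥ 3` and any `U ⊆ V(Q_n^3)` with
`2 ≤ |U| ≤ 8n − 10`, one has `|N_{Q_n^3}(U)| ≥ 4n − 3`. -/
theorem karyNCube3_nbhd_bound (n : ℕ) (hn : 3 ≤ n) (U : Set (Fin n → ZMod 3))
    (hU1 : 2 ≤ U.ncard) (hU2 : U.ncard ≤ 8 * n - 10) :
    4 * n - 3 ≤ (setNbhd (karyNCube n 3) U).ncard :=
  main_aux n hn U hU1 hU2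
end

section
/- Let BP_n be the n-dimensional burnt pancake network with n ≥ 3. If U is a subset of V(BP_n) with 2 ≤ |U| ≤ 4n − 8, then |N_{BP_n}(U)| ≥ 2n − 2. -/
open SimpleGraph

/-- The permutation of positions `{0,…,n−1}` reversing the first `i+1` positions
(those `j` with `j ≤ i`) and fixing the rest. -/
def revPerm (n : ℕ) (i : Fin n) : Equiv.Perm (Fin n) :=
  Function.Involutive.toPerm
    (fun j => if j.val ≤ i.val then ⟨i.val - j.val, Nat.lt_of_le_of_lt (Nat.sub_le _ _) i.isLt⟩ else j)
    (by
      intro j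
      dsimp only
      by_cases h : j.val ≤ i.val
      · rw [if_pos h, if_pos (by simp [Nat.sub_le])]
        exact Fin.ext (by simp; omega)
      · rw [if_neg h, if_neg h])

/-- A vertex of the burnt pancake network: a signed permutation of `{1,…,n}`, encoded as a
pair `(π, ε)` where `π j` is the symbol at position `j` and `ε j` is its sign. The `i`-th
prefix reversal (here `i : Fin n` reverses the first `i+1` entries) reverses the order of
the first `i+1` entries and negates each of them. -/
def prefixReversal {n : ℕ} (i : Fin n) (u : Equiv.Perm (Fin n) × (Fin n → Bool)) :
    Equiv.Perm (Fin n) × (Fin n → Bool) :=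
  (u.1 * revPerm n i, fun j => if j.val ≤ i.val then !(u.2 (revPerm n i j)) else u.2 j)

/-- The `n`-dimensional burnt pancake network `BP_n`: vertices are the signed permutations
of `{1,…,n}`, with `u` and `v` adjacent iff `v` is obtained from `u` by a prefix
reversal. -/
def burntPancake (n : ℕ) : SimpleGraph (Equiv.Perm (Fin n) × (Fin n → Bool)) :=
  SimpleGraph.fromRel (fun u v => ∃ i : Fin n, v = prefixReversal i u)

/-!
Fixing the entries at the positions `≥ k` cuts `BP_n` into copies of `BP_k`, in which every
vertex has exactly `k` neighbours, and the prefix reversal at position `k` joins each copy of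
`BP_k` to other copies inside the same copy of `BP_{k+1}`. The bound is proved inside every copy
of `BP_k`, by induction on `k ≥ 3`.

For `k = 3` we use that `BP_n` has no cycles of length 3 or 4: in such a graph a set `U` whose
vertices have `k` neighbours each in `S` has at least `k|U| - |U|²/2` neighbours in `S`, which is
`≥ 4` for `2 ≤ |U| ≤ 4`.

For the step, split `U ⊆ BP_{k+1}` along the copies of `BP_k`. A part of size at most `4k - 8`
has at least `k` outside neighbours in its own copy (by induction, or directly for a single
vertex). If all of `U` lies in one copy, the prefix reversal at position `k` adds `|U|` further
neighbours. If `U` meets two copies, one part is small and gives `k`; the other part, of size `a`,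
gives `k` as well when `a ≤ 4k - 8`, and otherwise it gives `2k - 2 - (a - (4k - 8))` inside its
copy plus at least `a - (|U| - a)` neighbours across position `k`.
-/

open Finset

lemma two_mul_le_two_add_mul_self_sub (t : ℕ) : 2 * t ≤ 2 + (t * t - t) := by
  rcases t with _ | s
  · simp
  · have := Nat.le_mul_self s
    simp only [Nat.succ_mul, Nat.mul_succ]
    omega

lemma le_mul_self_sub_add_one (t : ℕ) : t ≤ t * t - t + 1 := by
  have := two_mul_le_two_add_mul_self_sub t
  omega

namespace SimpleGraph

variable {V : Type*} [DecidableEq V] {G : SimpleGraph V} [DecidableRel G.Adj]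

lemma sum_card_offDiag_add_sum_card_le (hG3 : G.CliqueFree 3)
    (hG4 : ∀ ⦃u v⦄, u ≠ v → (G.commonNeighbors u v).Subsingleton) (U X : Finset V) :
    ∑ x ∈ X, #{u ∈ U | G.Adj u x}.offDiag + ∑ u ∈ U, #{a ∈ U | G.Adj a u} ≤ #U.offDiag := by
  have hdisj : (X : Set V).PairwiseDisjoint fun x => {u ∈ U | G.Adj u x}.offDiag := by
    intro x _ y _ hxy
    refine Finset.disjoint_left.2 fun p hpx hpy => hxy ?_
    simp only [mem_offDiag, mem_filter] at hpx hpy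
    exact hG4 hpx.2.2 ⟨hpx.1.2, hpx.2.1.2⟩ ⟨hpy.1.2, hpy.2.1.2⟩
  have hnonadj : X.biUnion (fun x => {u ∈ U | G.Adj u x}.offDiag) ⊆
      {p ∈ U.offDiag | ¬ G.Adj p.1 p.2} := by
    intro p hp
    simp only [mem_biUnion, mem_offDiag, mem_filter] at hp ⊢
    obtain ⟨x, -, ⟨hpU, hpx⟩, ⟨hqU, hqx⟩, hne⟩ := hp
    exact ⟨⟨hpU, hqU, hne⟩, fun h => hG3 {p.1, p.2, x} (is3Clique_triple_iff.2 ⟨h, hpx, hqx⟩)⟩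
  have hadj : ∑ u ∈ U, #{a ∈ U | G.Adj a u} = #{p ∈ U.offDiag | G.Adj p.1 p.2} := by
    have : {p ∈ U.offDiag | G.Adj p.1 p.2} = {p ∈ U ×ˢ U | G.Adj p.1 p.2} := by
      ext p; simp +contextual [G.ne_of_adj]
    rw [this]
    simp only [card_filter, sum_product_right]
  rw [← card_biUnion hdisj, hadj, ← card_filter_add_card_filter_not (s := U.offDiag)
    (p := fun p => G.Adj p.1 p.2), add_comm #{p ∈ U.offDiag | G.Adj p.1 p.2}]
  exact Nat.add_le_add_right (card_le_card hnonadj) _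

/-- Write `N` for the set on the right and `c x` for the number of neighbours of `x` in `U`.
The degrees give `k|U| ≤ ∑_{u ∈ U} c u + ∑_{w ∈ N} c w`, while `w ∈ N` is counted once and
`c w ≤ 1 + (c w)(c w - 1)/2`. Without 3- and 4-cycles the ordered pairs of neighbours in `U` of
the various `x ∈ U ∪ N` are distinct non-adjacent pairs of `U`, which bounds `∑ (c x)(c x - 1)`
by `|U|² - |U| - ∑_{u ∈ U} c u`. -/
theorem two_mul_mul_card_le_of_cliqueFree_three (hG3 : G.CliqueFree 3)
    (hG4 : ∀ ⦃u v⦄, u ≠ v → (G.commonNeighbors u v).Subsingleton) {S U : Finset V} {k : ℕ}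
    (hdeg : ∀ u ∈ U, k ≤ #{v ∈ S | G.Adj u v}) :
    2 * k * #U ≤ 2 * #{v ∈ S | v ∉ U ∧ ∃ u ∈ U, G.Adj u v} + #U * #U := by
  set N := {v ∈ S | v ∉ U ∧ ∃ u ∈ U, G.Adj u v}
  set c : V → ℕ := fun x => #{u ∈ U | G.Adj u x}
  have hsplit : ∀ u ∈ U, k ≤ c u + #{w ∈ N | G.Adj u w} := by
    intro u hu
    refine (hdeg u hu).trans ((card_le_card fun v hv => ?_).trans (card_union_le _ _))
    rw [mem_filter] at hv
    by_cases hvU : v ∈ U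
    · exact mem_union_left _ (mem_filter.2 ⟨hvU, hv.2.symm⟩)
    · exact mem_union_right _ (mem_filter.2 ⟨mem_filter.2 ⟨hv.1, hvU, u, hu, hv.2⟩, hv.2⟩)
  have hdouble : ∑ u ∈ U, #{w ∈ N | G.Adj u w} = ∑ w ∈ N, c w :=
    sum_card_bipartiteAbove_eq_sum_card_bipartiteBelow _
  have hpairs : ∑ x ∈ U, (c x * c x - c x) + ∑ x ∈ N, (c x * c x - c x) + ∑ u ∈ U, c u ≤
      #U * #U - #U := by
    have := sum_card_offDiag_add_sum_card_le hG3 hG4 U (U ∪ N)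
    rw [sum_union (Finset.disjoint_right.2 fun v hv => (mem_filter.1 hv).2.1)] at this
    simp only [offDiag_card] at this
    exact this
  have hN : ∑ w ∈ N, 2 * c w ≤ ∑ w ∈ N, (2 + (c w * c w - c w)) :=
    sum_le_sum fun w _ => two_mul_le_two_add_mul_self_sub (c w)
  have hU : ∑ u ∈ U, c u ≤ ∑ u ∈ U, (c u * c u - c u + 1) :=
    sum_le_sum fun u _ => le_mul_self_sub_add_one (c u)
  have hk : ∑ u ∈ U, k ≤ ∑ u ∈ U, (c u + #{w ∈ N | G.Adj u w}) := sum_le_sum hsplit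
  simp only [sum_add_distrib, sum_const, smul_eq_mul, ← mul_sum] at hN hU hk
  rw [hdouble] at hk
  have := Nat.sub_add_cancel (Nat.le_mul_self #U)
  linarith

end SimpleGraph

lemma setNbhd_subset_union_sdiff {V : Type*} (G : SimpleGraph V) {W U : Set V} (h : W ⊆ U) :
    setNbhd G W ⊆ setNbhd G U ∪ (U \ W) := by
  rintro v ⟨hvW, u, hu, huv⟩
  by_cases hvU : v ∈ U
  · exact Or.inr ⟨hvU, hvW⟩
  · exact Or.inl ⟨hvU, u, h hu, huv⟩

abbrev SignedPerm (n : ℕ) := Equiv.Perm (Fin n) × (Fin n → Bool)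

variable {n : ℕ}

section revPerm

variable {i j k l m z : Fin n}

lemma revPerm_val (i j : Fin n) :
    (revPerm n i j : ℕ) = if j.val ≤ i.val then i.val - j.val else j.val := by
  change Fin.val (if j.val ≤ i.val then (⟨i.val - j.val, _⟩ : Fin n) else j) = _
  split <;> rfl

lemma revPerm_of_lt (h : i < j) : revPerm n i j = j :=
  Fin.ext <| by rw [revPerm_val, if_neg (not_le.2 (Fin.lt_def.1 h))]

lemma revPerm_mul_revPerm_apply_of_lt (hi : i < m) (hj : j < m) :
    (revPerm n i * revPerm n j) m = m := by
  rw [Equiv.Perm.mul_apply, revPerm_of_lt hj, revPerm_of_lt hi]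

lemma revPerm_mul_revPerm_apply_max_ne (hij : i ≠ j) :
    (revPerm n i * revPerm n j) (max i j) ≠ max i j := by
  rw [Equiv.Perm.mul_apply, Ne, Fin.ext_iff, revPerm_val, revPerm_val, Fin.coe_max]
  have := Fin.val_ne_of_ne hij
  split_ifs <;> omega

/-- Equality of the two composites is read off from the images of the positions `max i j` and
`0`; the second alternative is genuine since `revPerm n 0 = 1`. -/
lemma eq_or_swap_of_revPerm_mul_revPerm_eq (hij : i ≠ j) (hkl : k ≠ l)
    (h : revPerm n i * revPerm n j = revPerm n k * revPerm n l) :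
    (i = k ∧ j = l) ∨ (i = l ∧ j = k ∧ (i.val = 0 ∨ j.val = 0)) := by
  have hmax : max i j = max k l := by
    by_contra hne
    rcases lt_or_gt_of_ne hne with hlt | hlt
    · exact revPerm_mul_revPerm_apply_max_ne hkl <| by
        rw [← h, revPerm_mul_revPerm_apply_of_lt (lt_of_le_of_lt (le_max_left i j) hlt)
          (lt_of_le_of_lt (le_max_right i j) hlt)]
    · exact revPerm_mul_revPerm_apply_max_ne hij <| by
        rw [h, revPerm_mul_revPerm_apply_of_lt (lt_of_le_of_lt (le_max_left k l) hlt)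
          (lt_of_le_of_lt (le_max_right k l) hlt)]
  have hM := congrArg Fin.val (Equiv.ext_iff.1 h (max i j))
  have h0 := congrArg Fin.val (Equiv.ext_iff.1 h ⟨0, i.pos⟩)
  have hmax' := congrArg Fin.val hmax
  simp only [Equiv.Perm.mul_apply, revPerm_val, Fin.coe_max, zero_le, if_true,
    Nat.sub_zero] at hM h0 hmax'
  have := Fin.val_ne_of_ne hij
  have := Fin.val_ne_of_ne hkl
  simp only [Fin.ext_iff]
  split_ifs at hM h0 <;> omega

lemma revPerm_revPerm (i j : Fin n) : revPerm n i (revPerm n i j) = j :=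
  Fin.ext <| by rw [revPerm_val, revPerm_val]; split_ifs <;> omega

lemma revPerm_mul_self (i : Fin n) : revPerm n i * revPerm n i = 1 :=
  Equiv.ext (revPerm_revPerm i)

lemma revPerm_eq_one (hz : z.val = 0) : revPerm n z = 1 :=
  Equiv.ext fun j => Fin.ext <| by rw [revPerm_val, Equiv.Perm.one_apply]; split_ifs <;> omega

lemma revPerm_apply_zero (i : Fin n) (hz : z.val = 0) : revPerm n i z = i :=
  Fin.ext <| by rw [revPerm_val, if_pos (by omega), hz, Nat.sub_zero]

end revPerm

section prefixReversal

variable {i j k l z : Fin n} {u v : SignedPerm n}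

lemma prefixReversal_fst (i : Fin n) (u : SignedPerm n) :
    (prefixReversal i u).1 = u.1 * revPerm n i := rfl

lemma prefixReversal_snd_apply (i : Fin n) (u : SignedPerm n) (j : Fin n) :
    (prefixReversal i u).2 j = if j.val ≤ i.val then !u.2 (revPerm n i j) else u.2 j := rfl

lemma prefixReversal_snd_of_lt (h : i < j) : (prefixReversal i u).2 j = u.2 j :=
  if_neg (not_le.2 (Fin.lt_def.1 h))

lemma prefixReversal_snd_zero (i : Fin n) (hz : z.val = 0) :
    (prefixReversal i u).2 z = !u.2 i := by
  rw [prefixReversal_snd_apply, if_pos (by omega), revPerm_apply_zero i hz]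

lemma prefixReversal_involutive (i : Fin n) : Function.Involutive (prefixReversal (n := n) i) := by
  intro u
  refine Prod.ext (by rw [prefixReversal_fst, prefixReversal_fst, mul_assoc, revPerm_mul_self,
    mul_one]) (funext fun j => ?_)
  by_cases hj : j.val ≤ i.val
  · have : (revPerm n i j).val ≤ i.val := by rw [revPerm_val, if_pos hj]; omega
    rw [prefixReversal_snd_apply, if_pos hj, prefixReversal_snd_apply, if_pos this,
      revPerm_revPerm, Bool.not_not]
  · rw [prefixReversal_snd_apply, if_neg hj, prefixReversal_snd_apply, if_neg hj]

lemma prefixReversal_ne_self (i : Fin n) (u : SignedPerm n) : prefixReversal i u ≠ u := by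
  intro h
  by_cases hi : i.val = 0
  · have := congrFun (congrArg Prod.snd h) i
    rw [prefixReversal_snd_zero i hi] at this
    exact Bool.not_ne_self _ this
  · have := congrArg (fun w : SignedPerm n => w.1 ⟨0, i.pos⟩) h
    simp only [prefixReversal_fst, Equiv.Perm.mul_apply,
      revPerm_apply_zero (z := ⟨0, i.pos⟩) i rfl] at this
    exact hi (congrArg Fin.val (u.1.injective this))

lemma prefixReversal_left_injective (u : SignedPerm n) :
    Function.Injective fun i : Fin n => prefixReversal i u := by
  intro i j h
  have := congrArg (fun w : SignedPerm n => w.1 ⟨0, i.pos⟩) h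
  simpa [prefixReversal_fst, revPerm_apply_zero] using this

lemma burntPancake_adj : (burntPancake n).Adj u v ↔ ∃ i, v = prefixReversal i u := by
  refine ⟨fun ⟨_, h⟩ => h.elim id fun ⟨i, hi⟩ => ⟨i, ?_⟩, fun ⟨i, hi⟩ => ⟨?_, .inl ⟨i, hi⟩⟩⟩
  · rw [hi, prefixReversal_involutive]
  · exact hi ▸ (prefixReversal_ne_self i u).symm

lemma burntPancake_adj_prefixReversal (i : Fin n) (u : SignedPerm n) :
    (burntPancake n).Adj u (prefixReversal i u) :=
  burntPancake_adj.2 ⟨i, rfl⟩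

lemma prefixReversal_comm_ne (hz : z.val = 0) (hi : i ≠ z) :
    prefixReversal i (prefixReversal z u) ≠ prefixReversal z (prefixReversal i u) := by
  intro h
  have := congrFun (congrArg Prod.snd h) z
  rw [prefixReversal_snd_zero i hz, prefixReversal_snd_zero z hz, prefixReversal_snd_zero i hz,
    prefixReversal_snd_of_lt (lt_of_le_of_ne (Fin.le_def.2 (by omega)) hi.symm),
    Bool.not_not] at this
  exact Bool.not_ne_self _ this

lemma eq_of_prefixReversal_prefixReversal_eq (hij : i ≠ j) (hkl : k ≠ l)
    (h : prefixReversal j (prefixReversal i u) = prefixReversal l (prefixReversal k u)) :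
    i = k := by
  have hrev : revPerm n i * revPerm n j = revPerm n k * revPerm n l := by
    simpa [prefixReversal_fst, mul_assoc] using congrArg Prod.fst h
  rcases eq_or_swap_of_revPerm_mul_revPerm_eq hij hkl hrev with
    ⟨hik, -⟩ | ⟨rfl, rfl, hi | hj⟩
  · exact hik
  · exact absurd h (prefixReversal_comm_ne hi hij.symm)
  · exact absurd h.symm (prefixReversal_comm_ne hj hij)

lemma prefixReversal_prefixReversal_ne (hij : i ≠ j) :
    prefixReversal j (prefixReversal i u) ≠ prefixReversal k u := by
  intro h
  have hrev : revPerm n i * revPerm n j = revPerm n k := by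
    simpa [prefixReversal_fst, mul_assoc] using congrArg Prod.fst h
  set z : Fin n := ⟨0, i.pos⟩
  by_cases hk : k = z
  · exact revPerm_mul_revPerm_apply_max_ne hij (by rw [hrev, hk, revPerm_eq_one rfl]; rfl)
  rw [← mul_one (revPerm n k), ← revPerm_eq_one (z := z) rfl] at hrev
  rcases eq_or_swap_of_revPerm_mul_revPerm_eq hij hk hrev with ⟨hik, hjz⟩ | ⟨hiz, hjk, -⟩
  · rw [hik, hjz] at h
    exact prefixReversal_ne_self z _ h
  · rw [hiz, hjk] at h
    exact prefixReversal_ne_self z u ((prefixReversal_involutive k).injective h)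

end prefixReversal



section tailClass

variable {k : ℕ} {i : Fin n} {u v c d : SignedPerm n}

def tail (k : ℕ) (u : SignedPerm n) (j : {j : Fin n // k ≤ j.val}) : Fin n × Bool :=
  (u.1 j, u.2 j)

/-- The vertices sharing the tail at positions `≥ k` with `u`: a copy of `BP_k` inside `BP_n`. -/
def tailClass (k : ℕ) (u : SignedPerm n) : Set (SignedPerm n) :=
  {v | tail k v = tail k u}

lemma mem_tailClass_self (k : ℕ) (u : SignedPerm n) : u ∈ tailClass k u := rfl

lemma tailClass_eq_of_mem (h : v ∈ tailClass k u) : tailClass k v = tailClass k u := by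
  ext w
  exact ⟨fun hw => hw.trans h, fun hw => hw.trans h.symm⟩

lemma disjoint_tailClass (h : v ∉ tailClass k u) : Disjoint (tailClass k u) (tailClass k v) :=
  Set.disjoint_left.2 fun _ hu hv => h (hv.symm.trans hu)

lemma tailClass_mono {j : ℕ} (hjk : j ≤ k) (u : SignedPerm n) : tailClass j u ⊆ tailClass k u :=
  fun _ hv => funext fun x => congrFun hv ⟨x, hjk.trans x.2⟩

lemma tailClass_eq_univ (hk : n ≤ k) (u : SignedPerm n) : tailClass k u = Set.univ :=
  Set.eq_univ_of_forall fun _ => funext fun x => absurd x.2 (by omega)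

lemma prefixReversal_mem_tailClass_iff (hk : k ≠ 0) :
    prefixReversal i u ∈ tailClass k u ↔ i.val < k := by
  refine ⟨fun h => ?_, fun h => funext fun ⟨j, hj⟩ => ?_⟩
  · by_contra hik
    have := congrArg Prod.fst (congrFun (h : tail k _ = tail k u) ⟨i, by omega⟩)
    have hi0 := congrArg Fin.val (u.1.injective this)
    simp only [revPerm_val, le_refl, if_true, Nat.sub_self] at hi0
    omega
  · have hij : i < j := Fin.lt_def.2 (by omega)
    simp only [tail, prefixReversal_fst, Equiv.Perm.mul_apply, revPerm_of_lt hij,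
      prefixReversal_snd_of_lt hij]

lemma le_ncard_neighborSet_inter_tailClass (hk : k ≠ 0) (hkn : k ≤ n) (u : SignedPerm n) :
    k ≤ ((burntPancake n).neighborSet u ∩ tailClass k u).ncard := by
  let f : Fin k → SignedPerm n := fun i => prefixReversal (Fin.castLE hkn i) u
  have hf : Function.Injective f :=
    (prefixReversal_left_injective u).comp (Fin.castLE_injective hkn)
  calc k = (Set.range f).ncard := by rw [Set.ncard_range_of_injective hf, Nat.card_eq_fintype_card,
        Fintype.card_fin]
    _ ≤ _ := Set.ncard_le_ncard <| Set.range_subset_iff.2 fun i =>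
        Set.mem_inter (burntPancake_adj_prefixReversal _ u)
          ((prefixReversal_mem_tailClass_iff hk).2 i.2)

end tailClass

theorem burntPancake_cliqueFree_three : (burntPancake n).CliqueFree 3 := by
  intro s hs
  obtain ⟨a, b, c, hab, hac, hbc, rfl⟩ := is3Clique_iff.1 hs
  obtain ⟨i, rfl⟩ := burntPancake_adj.1 hab
  obtain ⟨j, rfl⟩ := burntPancake_adj.1 hbc
  obtain ⟨k, hk⟩ := burntPancake_adj.1 hac
  have hij : i ≠ j := by
    rintro rfl
    exact hac.ne (prefixReversal_involutive i a).symm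
  exact prefixReversal_prefixReversal_ne hij hk

theorem burntPancake_commonNeighbors_subsingleton {u v : SignedPerm n} (huv : u ≠ v) :
    ((burntPancake n).commonNeighbors u v).Subsingleton := by
  rintro w₁ ⟨hu₁, hv₁⟩ w₂ ⟨hu₂, hv₂⟩
  obtain ⟨i, rfl⟩ := burntPancake_adj.1 hu₁
  obtain ⟨j, hj⟩ := burntPancake_adj.1 hv₁.symm
  obtain ⟨k, rfl⟩ := burntPancake_adj.1 hu₂
  obtain ⟨l, hl⟩ := burntPancake_adj.1 hv₂.symm
  have hij : i ≠ j := by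
    rintro rfl
    exact huv (hj.trans (prefixReversal_involutive i u)).symm
  have hkl : k ≠ l := by
    rintro rfl
    exact huv (hl.trans (prefixReversal_involutive k u)).symm
  rw [eq_of_prefixReversal_prefixReversal_eq hij hkl (hj.symm.trans hl)]

/-- The theorem inside the copies of `BP_k`. -/
def TailClassNbhdBound (n k : ℕ) : Prop :=
  ∀ (c : SignedPerm n) (U : Set (SignedPerm n)), U ⊆ tailClass k c → 2 ≤ U.ncard →
    U.ncard ≤ 4 * k - 8 → 2 * k - 2 ≤ (setNbhd (burntPancake n) U ∩ tailClass k c).ncard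

theorem tailClassNbhdBound_three (hn : 3 ≤ n) : TailClassNbhdBound n 3 := by
  classical
  intro c U hU h2 h4
  lift U to Finset (SignedPerm n) using U.toFinite
  rw [Set.ncard_coe_finset] at h2 h4
  set S := (tailClass 3 c).toFinset
  have hdeg : ∀ u ∈ U, 3 ≤ #{v ∈ S | (burntPancake n).Adj u v} := by
    intro u hu
    have hS : (({v ∈ S | (burntPancake n).Adj u v} : Finset _) : Set (SignedPerm n)) =
        (burntPancake n).neighborSet u ∩ tailClass 3 u := by
      ext v
      simp [S, tailClass_eq_of_mem (hU hu), and_comm]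
    rw [← Set.ncard_coe_finset, hS]
    exact le_ncard_neighborSet_inter_tailClass (by norm_num) hn u
  have hN : (({v ∈ S | v ∉ U ∧ ∃ u ∈ U, (burntPancake n).Adj u v} : Finset _) :
      Set (SignedPerm n)) = setNbhd (burntPancake n) U ∩ tailClass 3 c := by
    ext v
    simp only [S, coe_filter, Set.mem_toFinset, setNbhd, Set.mem_inter_iff, Set.mem_ofPred_eq,
      mem_coe]
    tauto
  have key := two_mul_mul_card_le_of_cliqueFree_three burntPancake_cliqueFree_three
    (fun _ _ => burntPancake_commonNeighbors_subsingleton) hdeg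
  rw [← Set.ncard_coe_finset {v ∈ S | _}, hN] at key
  interval_cases #U <;> omega

section step

variable {k : ℕ} {U : Set (SignedPerm n)} {c d : SignedPerm n}

local notation "BP" => burntPancake n

lemma ncard_setNbhd_inter_tailClass_of_two_le (ih : TailClassNbhdBound n k) (hk : 3 ≤ k)
    (h : 2 ≤ (U ∩ tailClass k c).ncard) :
    2 * k - 2 ≤
      (setNbhd BP U ∩ tailClass k c).ncard + ((U ∩ tailClass k c).ncard - (4 * k - 8)) := by
  obtain ⟨W, hW, hWcard⟩ := Set.exists_subset_card_eq (s := U ∩ tailClass k c)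
    (min_le_left _ (4 * k - 8))
  have hNW := ih c W (hW.trans Set.inter_subset_right) (by omega) (by omega)
  have hsub : setNbhd BP W ∩ tailClass k c ⊆
      (setNbhd BP U ∩ tailClass k c) ∪ ((U ∩ tailClass k c) \ W) := by
    rintro v ⟨hv, hvc⟩
    rcases setNbhd_subset_union_sdiff BP (hW.trans Set.inter_subset_left) hv with hv | ⟨hvU, hvW⟩
    · exact Or.inl ⟨hv, hvc⟩
    · exact Or.inr ⟨⟨hvU, hvc⟩, hvW⟩
  have := (Set.ncard_le_ncard hsub).trans (Set.ncard_union_le _ _)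
  rw [Set.ncard_sdiff hW] at this
  omega

lemma le_ncard_setNbhd_inter_tailClass (ih : TailClassNbhdBound n k) (hk : 3 ≤ k) (hkn : k ≤ n)
    (hc : c ∈ U) (h : (U ∩ tailClass k c).ncard ≤ 4 * k - 8) :
    k ≤ (setNbhd BP U ∩ tailClass k c).ncard := by
  by_cases h2 : 2 ≤ (U ∩ tailClass k c).ncard
  · have := ncard_setNbhd_inter_tailClass_of_two_le ih hk h2
    omega
  refine (le_ncard_neighborSet_inter_tailClass (by omega) hkn c).trans (Set.ncard_le_ncard ?_)
  rintro v ⟨hcv, hv⟩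
  refine ⟨⟨fun hvU => h2 ?_, c, hc, hcv⟩, hv⟩
  rw [← Set.ncard_pair (SimpleGraph.Adj.ne (G := BP) hcv)]
  exact Set.ncard_le_ncard (Set.insert_subset ⟨hc, mem_tailClass_self k c⟩
    (Set.singleton_subset_iff.2 ⟨hvU, hv⟩))

/-- The prefix reversal at position `k` maps each vertex of the copy of `BP_k` through `c` to a
neighbour in another copy; those neighbours that fall outside `U` lie in `N(U)`. -/
lemma ncard_setNbhd_inter_tailClass_add_le (hk : k ≠ 0) (hkn : k < n) :
    (setNbhd BP U ∩ tailClass k c).ncard + (U ∩ tailClass k c).ncard ≤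
      (setNbhd BP U ∩ tailClass (k + 1) c).ncard + (U \ tailClass k c).ncard := by
  set σ := prefixReversal (⟨k, hkn⟩ : Fin n)
  set A := σ '' (U ∩ tailClass k c)
  have hσ : ∀ u ∈ U ∩ tailClass k c, σ u ∈ tailClass (k + 1) c \ tailClass k c := by
    rintro u ⟨-, hu⟩
    rw [← tailClass_eq_of_mem (tailClass_mono k.le_succ c hu), ← tailClass_eq_of_mem hu]
    exact ⟨(prefixReversal_mem_tailClass_iff k.succ_ne_zero).2 k.lt_succ_self,
      fun h => (lt_irrefl k) ((prefixReversal_mem_tailClass_iff hk).1 h)⟩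
  have hA : (U ∩ tailClass k c).ncard ≤ (A \ U).ncard + (U \ tailClass k c).ncard := by
    have hAU : A ∩ U ⊆ U \ tailClass k c := by
      rintro _ ⟨⟨u, hu, rfl⟩, hσU⟩
      exact ⟨hσU, (hσ u hu).2⟩
    have := Set.ncard_inter_add_ncard_sdiff_eq_ncard A U
    rw [Set.ncard_image_of_injective _ (prefixReversal_involutive _).injective] at this
    have := Set.ncard_le_ncard hAU
    omega
  have hdisj : Disjoint (setNbhd BP U ∩ tailClass k c) (A \ U) := by
    refine Set.disjoint_left.2 fun v hv hvA => ?_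
    obtain ⟨⟨u, hu, rfl⟩, -⟩ := hvA
    exact (hσ u hu).2 hv.2
  have hsub : (setNbhd BP U ∩ tailClass k c) ∪ (A \ U) ⊆ setNbhd BP U ∩ tailClass (k + 1) c := by
    rintro v (⟨hv, hvc⟩ | ⟨⟨u, hu, rfl⟩, hσU⟩)
    · exact ⟨hv, tailClass_mono k.le_succ c hvc⟩
    · exact ⟨⟨hσU, u, hu.1, burntPancake_adj_prefixReversal _ u⟩, (hσ u hu).1⟩
  have := Set.ncard_le_ncard hsub
  rw [Set.ncard_union_eq hdisj] at this
  omega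

lemma ncard_add_ncard_le_of_notMem_tailClass (hd : d ∈ tailClass (k + 1) c)
    (hdc : d ∉ tailClass k c) :
    (setNbhd BP U ∩ tailClass k c).ncard + (setNbhd BP U ∩ tailClass k d).ncard ≤
      (setNbhd BP U ∩ tailClass (k + 1) c).ncard := by
  rw [← Set.ncard_union_eq ((disjoint_tailClass hdc).mono Set.inter_subset_right
    Set.inter_subset_right)]
  refine Set.ncard_le_ncard (Set.union_subset ?_ ?_)
  · exact Set.inter_subset_inter_right _ (tailClass_mono k.le_succ c)
  · rw [← tailClass_eq_of_mem hd]
    exact Set.inter_subset_inter_right _ (tailClass_mono k.le_succ d)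

lemma two_mul_le_of_notMem_tailClass (ih : TailClassNbhdBound n k) (hk : 3 ≤ k) (hkn : k < n)
    (hU : U.ncard ≤ 4 * k - 4) (hc : c ∈ U) (hdU : d ∈ U) (hd : d ∈ tailClass (k + 1) c)
    (hdc : d ∉ tailClass k c) (hd_small : (U ∩ tailClass k d).ncard ≤ 4 * k - 8) :
    2 * k ≤ (setNbhd BP U ∩ tailClass (k + 1) c).ncard := by
  have hXd := le_ncard_setNbhd_inter_tailClass ih hk hkn.le hdU hd_small
  have hsum := ncard_add_ncard_le_of_notMem_tailClass (U := U) hd hdc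
  by_cases hc_small : (U ∩ tailClass k c).ncard ≤ 4 * k - 8
  · have := le_ncard_setNbhd_inter_tailClass ih hk hkn.le hc hc_small
    omega
  have hXc := ncard_setNbhd_inter_tailClass_of_two_le ih hk (c := c) (U := U) (by omega)
  have hcross := ncard_setNbhd_inter_tailClass_add_le (U := U) (c := c) (by omega) hkn
  have hsplit := Set.ncard_inter_add_ncard_sdiff_eq_ncard U (tailClass k c)
  omega

theorem TailClassNbhdBound.succ (ih : TailClassNbhdBound n k) (hk : 3 ≤ k) (hkn : k < n) :
    TailClassNbhdBound n (k + 1) := by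
  intro u₀ U hU h2 h4
  obtain ⟨c, hc⟩ : U.Nonempty := Set.nonempty_of_ncard_ne_zero (by omega)
  have hcl := tailClass_eq_of_mem (hU hc)
  rw [← hcl] at hU ⊢
  rcases (U \ tailClass k c).eq_empty_or_nonempty with hr | ⟨d, hdU, hdc⟩
  · have hsplit := Set.ncard_inter_add_ncard_sdiff_eq_ncard U (tailClass k c)
    have hcross := ncard_setNbhd_inter_tailClass_add_le (U := U) (c := c) (by omega) hkn
    rw [hr, Set.ncard_empty] at hsplit hcross
    have := ncard_setNbhd_inter_tailClass_of_two_le ih hk (c := c) (U := U) (by omega)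
    omega
  -- The two parts are disjoint, so one of them has at most `2k - 2 ≤ 4k - 8` vertices.
  have hparts : (U ∩ tailClass k c).ncard + (U ∩ tailClass k d).ncard ≤ U.ncard := by
    rw [← Set.ncard_union_eq ((disjoint_tailClass hdc).mono Set.inter_subset_right
      Set.inter_subset_right)]
    exact Set.ncard_le_ncard (Set.union_subset Set.inter_subset_left Set.inter_subset_left)
  rcases le_total (U ∩ tailClass k c).ncard (U ∩ tailClass k d).ncard with hle | hle
  · have hcd : c ∉ tailClass k d := fun h => hdc (tailClass_eq_of_mem h ▸ mem_tailClass_self k d)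
    rw [← tailClass_eq_of_mem (hU hdU)]
    exact two_mul_le_of_notMem_tailClass ih hk hkn (by omega) hdU hc
      (tailClass_eq_of_mem (hU hdU) ▸ mem_tailClass_self _ c) hcd (by omega)
  · exact two_mul_le_of_notMem_tailClass ih hk hkn (by omega) hc hdU (hU hdU) hdc (by omega)

theorem tailClassNbhdBound (hk : 3 ≤ k) (hkn : k ≤ n) : TailClassNbhdBound n k := by
  induction k, hk using Nat.le_induction with
  | base => exact tailClassNbhdBound_three hkn
  | succ k hk ih => exact (ih (by omega)).succ hk (by omega)

end step

/-- For the burnt pancake network `BP_n` with `n ≥ 3` and any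
`U ⊆ V(BP_n)` with `2 ≤ |U| ≤ 4n − 8`, one has `|N_{BP_n}(U)| ≥ 2n − 2`. -/
theorem burntPancake_nbhd_bound (n : ℕ) (hn : 3 ≤ n)
    (U : Set (Equiv.Perm (Fin n) × (Fin n → Bool)))
    (hU1 : 2 ≤ U.ncard) (hU2 : U.ncard ≤ 4 * n - 8) :
    2 * n - 2 ≤ (setNbhd (burntPancake n) U).ncard := by
  have huniv := tailClass_eq_univ (k := n) le_rfl (1, fun _ => false)
  have := tailClassNbhdBound hn le_rfl (1, fun _ => false) U (huniv ▸ Set.subset_univ U) hU1 hU2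
  rwa [huniv, Set.inter_univ] at this
end
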